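/- arXiv:1103.5305 — 6 statements merged into one kernel-verified Lean document; each statement's English description precedes it below -/
import Mathlib

section
/- Let θ : ℝ → ℝ be smooth, let R ∈ (0,∞), and assume Hypothesis (H_R) holds. Then for every x ∈ ℝ, θ(x) ≥ −π²/(4R²). -/
noncomputable section

/-- `g_R(t) = -(R/π)·log(1 - (π/R)·t)`. -/
def gR (R t : ℝ) : ℝ := -(R / Real.pi) * Real.log (1 - (Real.pi / R) * t)

/-- `f` is a (smooth) solution of `f'' + θ·f = 0`. -/
def IsSolution (θ f : ℝ → ℝ) : Prop :=
  ContDiff ℝ (⊤ : ℕ∞) f ∧ ∀ t, deriv (deriv f) t + θ t * f t = 0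

/-- `f₁, f₂` is the fundamental pair of solutions of `f'' + θ·f = 0` at `x`:
`f₁(x) = f₂'(x) = 1`, `f₂(x) = f₁'(x) = 0`. -/
def IsFundPair (θ : ℝ → ℝ) (x : ℝ) (f₁ f₂ : ℝ → ℝ) : Prop :=
  IsSolution θ f₁ ∧ IsSolution θ f₂ ∧
  f₁ x = 1 ∧ deriv f₁ x = 0 ∧ f₂ x = 0 ∧ deriv f₂ x = 1

/-- The `n`-th `g_R`-Schwarzian `𝒮_n^{θ,g_R}(x)`, computed from the fundamental pair
`f₁, f₂` at `x`: the `n`-th derivative at `t = 0` of `t ↦ h_x(x + g_R(t))`,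
where `h_x = f₂/f₁`. -/
def SchR (R x : ℝ) (f₁ f₂ : ℝ → ℝ) (n : ℕ) : ℝ :=
  iteratedDeriv n (fun t => f₂ (x + gR R t) / f₁ (x + gR R t)) 0

/-- The determinant `𝒟_n^{θ,g_R}(x)` of the `n×n` Hankel matrix with `(i,j)` entry
`𝒮_{i+j-1}^{θ,g_R}(x)/(i+j-1)!`. -/
def DetR (R x : ℝ) (f₁ f₂ : ℝ → ℝ) (n : ℕ) : ℝ :=
  (Matrix.of fun i j : Fin n =>
    SchR R x f₁ f₂ (i.1 + j.1 + 1) / (Nat.factorial (i.1 + j.1 + 1) : ℝ)).det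

/-- Hypothesis (H_R): `f₁, f₂` are linearly independent solutions of `f'' + θ·f = 0`
(constant Wronskian `W = f₁f₂' - f₁'f₂ ≠ 0`) and `h = f₂/f₁` admits a meromorphic
extension `H` to the strip `{|Im z| < R}` (holomorphic off the real zeros of `f₁`,
with poles at those zeros) which satisfies `W·Im H(z)·Im z > 0` for `0 < Im z < R`. -/
def HypR (θ : ℝ → ℝ) (R : ℝ) : Prop :=
  ∃ (f₁ f₂ : ℝ → ℝ) (H : ℂ → ℂ),
    IsSolution θ f₁ ∧ IsSolution θ f₂ ∧
    f₁ 0 * deriv f₂ 0 - deriv f₁ 0 * f₂ 0 ≠ 0 ∧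
    (∀ t : ℝ, f₁ t ≠ 0 → H t = ((f₂ t / f₁ t : ℝ) : ℂ)) ∧
    DifferentiableOn ℂ H
      {z : ℂ | |z.im| < R ∧ ∀ t : ℝ, f₁ t = 0 → z ≠ (t : ℂ)} ∧
    (∀ t : ℝ, f₁ t = 0 →
      Filter.Tendsto (fun z => ‖H z‖) (nhdsWithin (t : ℂ) {(t : ℂ)}ᶜ) Filter.atTop) ∧
    (∀ z : ℂ, 0 < z.im → z.im < R →
      0 < (f₁ 0 * deriv f₂ 0 - deriv f₁ 0 * f₂ 0) * (H z).im * z.im)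

/-- `(i,j)` entry (1-based, clamped to ℕ) of the matrix `T(f,n)(t)`:
`f^{(j-i)}(t)/(j-i)!` if `i ≤ j`, and `0` otherwise. -/
def Tentry (f : ℝ → ℝ) (t : ℝ) (i j : ℕ) : ℝ :=
  if i ≤ j then iteratedDeriv (j - i) f t / (Nat.factorial (j - i) : ℝ) else 0

end

/-!
Fix `x` with `f₁ x ≠ 0`. The real Möbius transformation taking `h = f₂ / f₁` to the quotient
`v / u` of the fundamental pair at `x` turns the extension of `h` into a holomorphic map `G` from
the strip `0 < Im z < R` to the upper half-plane that is also holomorphic near `x`, with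
`G x = 0`, `G' x = 1`, `G'' x = 0` and `G''' x = 2 θ x` (the Schwarzian of `v / u` is `2 θ`).
With `r = π / R`, the Schwarz–Pick inequality for the strip says that
`Φ w = r G (x + w) - G' (x + w) sinh (r w)` has `Im Φ (i y) ≥ 0` for small `y > 0`, while the
Taylor expansion of `Φ` at `0` starts with `-(r / 6) (4 θ x + r²) w³`. Hence `4 θ x + r² ≥ 0`.
The zeros of `f₁` are simple, so the bound reaches them by continuity of `θ`.
-/

section

open Filter Topology Complex ComplexConjugate Metric

namespace IsSolution

variable {θ f g : ℝ → ℝ}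

lemma differentiable (hf : IsSolution θ f) : Differentiable ℝ f :=
  hf.1.differentiable (by simp)

lemma differentiable_deriv (hf : IsSolution θ f) : Differentiable ℝ (deriv f) :=
  (contDiff_infty_iff_deriv.mp hf.1).2.differentiable (by simp)

lemma deriv_deriv (hf : IsSolution θ f) (t : ℝ) : deriv (deriv f) t = -(θ t * f t) :=
  eq_neg_of_add_eq_zero_left (hf.2 t)

lemma deriv_linear_comb (hf : IsSolution θ f) (hg : IsSolution θ g) (a b : ℝ) :
    deriv (fun t => a * f t + b * g t) = fun t => a * deriv f t + b * deriv g t :=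
  funext fun t => (((hf.differentiable t).hasDerivAt.const_mul a).fun_add
    ((hg.differentiable t).hasDerivAt.const_mul b)).deriv

lemma linear_comb (hf : IsSolution θ f) (hg : IsSolution θ g) (a b : ℝ) :
    IsSolution θ (fun t => a * f t + b * g t) := by
  refine ⟨(contDiff_const.mul hf.1).add (contDiff_const.mul hg.1), fun t => ?_⟩
  rw [deriv_linear_comb hf hg, (((hf.differentiable_deriv t).hasDerivAt.const_mul a).fun_add
    ((hg.differentiable_deriv t).hasDerivAt.const_mul b)).deriv, hf.deriv_deriv, hg.deriv_deriv]
  ring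

lemma wronskian_eq (hf : IsSolution θ f) (hg : IsSolution θ g) (s t : ℝ) :
    f s * deriv g s - deriv f s * g s = f t * deriv g t - deriv f t * g t := by
  have hW : ∀ r, HasDerivAt (fun t => f t * deriv g t - deriv f t * g t) 0 r := fun r => by
    have hf₀ := (hf.differentiable r).hasDerivAt
    have hf₁ := (hf.differentiable_deriv r).hasDerivAt
    have hg₀ := (hg.differentiable r).hasDerivAt
    have hg₁ := (hg.differentiable_deriv r).hasDerivAt
    refine ((hf₀.fun_mul hg₁).fun_sub (hf₁.fun_mul hg₀)).congr_deriv ?_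
    rw [hf.deriv_deriv, hg.deriv_deriv]
    ring
  exact is_const_of_deriv_eq_zero (fun r => (hW r).differentiableAt) (fun r => (hW r).deriv) s t

end IsSolution

lemma IsSolution.isFundPair {θ f₁ f₂ : ℝ → ℝ} (h₁ : IsSolution θ f₁) (h₂ : IsSolution θ f₂)
    {x W : ℝ} (hW : f₁ x * deriv f₂ x - deriv f₁ x * f₂ x = W) (hW0 : W ≠ 0) :
    IsFundPair θ x (fun t => deriv f₂ x / W * f₁ t + -deriv f₁ x / W * f₂ t)
      (fun t => -f₂ x / W * f₁ t + f₁ x / W * f₂ t) := by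
  refine ⟨h₁.linear_comb h₂ _ _, h₁.linear_comb h₂ _ _, ?_, ?_, ?_, ?_⟩ <;>
    simp only [h₁.deriv_linear_comb h₂] <;> field_simp
  · linear_combination hW
  · ring
  · ring
  · linear_combination hW

namespace IsFundPair

variable {θ u v : ℝ → ℝ} {x : ℝ}

lemma wronskian_eq_one (h : IsFundPair θ x u v) (t : ℝ) :
    u t * deriv v t - deriv u t * v t = 1 := by
  obtain ⟨hu, hv, hu₀, hu₁, hv₀, hv₁⟩ := h
  rw [hu.wronskian_eq hv t x, hu₀, hu₁, hv₀, hv₁]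
  ring

lemma quotient_derivs (h : IsFundPair θ x u v) :
    v x / u x = 0 ∧ deriv (fun t => v t / u t) x = 1 ∧
      deriv (deriv (fun t => v t / u t)) x = 0 ∧
      deriv (deriv (deriv (fun t => v t / u t))) x = 2 * θ x := by
  have hW := h.wronskian_eq_one
  obtain ⟨hu, hv, hu₀, hu₁, hv₀, -⟩ := h
  have hu' := fun t => (hu.differentiable t).hasDerivAt
  have hu'' := fun t => (hu.differentiable_deriv t).hasDerivAt
  have hne : ∀ᶠ t in 𝓝 x, u t ≠ 0 :=
    hu.differentiable.continuous.continuousAt.eventually_ne (by rw [hu₀]; exact one_ne_zero)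
  have hd1 : deriv (fun t => v t / u t) =ᶠ[𝓝 x] fun t => (u t ^ 2)⁻¹ := by
    filter_upwards [hne] with t ht
    rw [((hv.differentiable t).hasDerivAt.fun_div (hu' t) ht).deriv, ← one_div, ← hW t]
    ring
  have hd2 : deriv (deriv (fun t => v t / u t)) =ᶠ[𝓝 x]
      fun t => -(2 * (u t * deriv u t)) / (u t ^ 2) ^ 2 := by
    filter_upwards [hd1.eventuallyEq_nhds, hne] with t ht hut
    rw [ht.deriv_eq, (((hu' t).fun_pow 2).fun_inv (pow_ne_zero 2 hut)).deriv]
    norm_num [mul_assoc]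
  refine ⟨by simp [hv₀], by simp [hd1.eq_of_nhds, hu₀], by simp [hd2.eq_of_nhds, hu₁], ?_⟩
  rw [hd2.deriv_eq, ((((hu' x).fun_mul (hu'' x)).const_mul 2).fun_neg.fun_div
    (((hu' x).fun_pow 2).fun_pow 2) (by simp [hu₀])).deriv, hu.deriv_deriv, hu₀, hu₁]
  ring

end IsFundPair

lemma const_le_of_le_off_simple_zeros {f θ : ℝ → ℝ} (hf : Differentiable ℝ f)
    (hsimple : ∀ t, f t = 0 → deriv f t ≠ 0) (hθ : Continuous θ) {c : ℝ}
    (h : ∀ t, f t ≠ 0 → c ≤ θ t) (x : ℝ) : c ≤ θ x := by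
  by_cases hx : f x = 0
  · have hne : ∀ᶠ t in 𝓝[≠] x, f t ≠ 0 := by
      simpa [hx] using (hf x).hasDerivAt.eventually_ne (hsimple x hx)
    exact ge_of_tendsto (hθ.continuousAt.mono_left nhdsWithin_le_nhds) (hne.mono h)
  · exact h x hx

lemma deriv_eq_ofReal_of_eventuallyEq {Φ : ℂ → ℂ} {g : ℝ → ℝ} {t : ℝ}
    (hΦ : DifferentiableAt ℂ Φ t) (hg : ∀ᶠ s : ℝ in 𝓝 t, Φ s = g s) : deriv Φ t = deriv g t := by
  have hre : HasDerivAt g (deriv Φ t).re t :=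
    hΦ.hasDerivAt.real_of_complex.congr_of_eventuallyEq (hg.mono fun s hs => by simp [hs])
  have him : HasDerivAt (fun _ : ℝ => (0 : ℝ)) (deriv Φ t).im t := by
    refine (imCLM.hasFDerivAt.comp_hasDerivAt t hΦ.hasDerivAt.comp_ofReal).congr_of_eventuallyEq ?_
    filter_upwards [hg] with s hs
    simp [hs]
  apply Complex.ext
  · simp [hre.deriv]
  · simp [him.unique (hasDerivAt_const t 0)]

lemma iteratedDeriv_eq_ofReal_of_eventuallyEq {Φ : ℂ → ℂ} {g : ℝ → ℝ} {t : ℝ}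
    (hΦ : AnalyticAt ℂ Φ t) (hg : ∀ᶠ s : ℝ in 𝓝 t, Φ s = g s) (n : ℕ) :
    iteratedDeriv n Φ t = iteratedDeriv n g t := by
  have hA : ∀ᶠ s : ℝ in 𝓝 t, AnalyticAt ℂ Φ (s : ℂ) :=
    continuous_ofReal.continuousAt.eventually hΦ.eventually_analyticAt
  suffices ∀ n, ∀ᶠ s : ℝ in 𝓝 t, iteratedDeriv n Φ s = iteratedDeriv n g s from
    (this n).self_of_nhds
  intro n
  induction n with
  | zero => simpa using hg
  | succ n ih =>
    filter_upwards [hA, ih.eventually_nhds] with s hs hs'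
    rw [iteratedDeriv_succ, iteratedDeriv_succ]
    exact deriv_eq_ofReal_of_eventuallyEq
      (by rw [iteratedDeriv_eq_iterate]; exact (hs.iterated_deriv n).differentiableAt) hs'

lemma im_div_real_mobius (a b c d : ℝ) (h : ℂ) :
    ((a * h + b) / (c * h + d)).im = (a * d - b * c) * h.im / normSq (c * h + d) := by
  rw [div_im]
  simp only [add_im, mul_im, ofReal_re, ofReal_im, zero_mul, add_zero, add_re, mul_re, sub_zero]
  ring

lemma real_mobius_denom_ne_zero {a b c d : ℝ} (hdet : a * d - b * c ≠ 0) {h : ℂ} (hh : h.im ≠ 0) :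
    (c * h + d : ℂ) ≠ 0 := by
  intro h0
  have hc : c = 0 := by simpa [hh] using congrArg im h0
  have hd : d = 0 := by simpa [hc] using congrArg re h0
  simp [hc, hd] at hdet

lemma im_div_one_sub_pos {z w : ℂ} (hz : 0 < z.im) (hw : ‖w‖ < 1) :
    0 < ((z - conj z * w) / (1 - w)).im := by
  have hw' : normSq w < 1 := by
    rw [normSq_eq_norm_sq]; nlinarith [norm_nonneg w]
  have hD : 1 - w ≠ 0 := fun h => by
    rw [show w = 1 by linear_combination -h] at hw; simp at hw
  have hnum : (z - conj z * w).im * (1 - w).re - (z - conj z * w).re * (1 - w).im =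
      z.im * (1 - normSq w) := by
    simp only [sub_im, mul_im, conj_re, conj_im, sub_re, one_re, mul_re, one_im, normSq_apply]
    ring
  rw [div_im, ← sub_div, hnum]
  exact div_pos (mul_pos hz (by linarith)) (normSq_pos.mpr hD)

lemma norm_sub_div_sub_conj_lt_one {v ω : ℂ} (hv : 0 < v.im) (hω : 0 < ω.im) :
    ‖(v - ω) / (v - conj ω)‖ < 1 := by
  have hlt : normSq (v - ω) < normSq (v - conj ω) := by
    simp only [normSq_apply, sub_re, sub_im, conj_re, conj_im]
    nlinarith [mul_pos hv hω]
  rw [norm_div, div_lt_one (by simpa using (normSq_nonneg _).trans_lt hlt), norm_def, norm_def]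
  exact Real.sqrt_lt_sqrt (normSq_nonneg _) hlt

/-- Schwarz–Pick for the upper half-plane: conjugate by Cayley transforms sending `z` and `F z`
to `0`, then apply the Schwarz lemma on the unit disc. -/
lemma norm_deriv_mul_im_le_im {F : ℂ → ℂ} (hd : DifferentiableOn ℂ F {z | 0 < z.im})
    (hF : ∀ z : ℂ, 0 < z.im → 0 < (F z).im) {z : ℂ} (hz : 0 < z.im) :
    ‖deriv F z‖ * z.im ≤ (F z).im := by
  set ω := F z
  have hω : 0 < ω.im := hF z hz
  set φ : ℂ → ℂ := fun w => (z - conj z * w) / (1 - w)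
  set τ : ℂ → ℂ := fun v => (v - ω) / (v - conj ω)
  have hconj : ∀ v : ℂ, 0 < v.im → v - conj v ≠ 0 := fun v hv h => by
    rw [sub_conj] at h; simp at h; linarith
  have hτne : ∀ v : ℂ, 0 < v.im → v - conj ω ≠ 0 := fun v hv h => by
    have := congrArg im h; simp at this; linarith
  have hφ : HasDerivAt φ (z - conj z) 0 := by
    refine (((hasDerivAt_id (0 : ℂ)).const_mul (conj z)).const_sub z).div
      ((hasDerivAt_id (0 : ℂ)).const_sub 1) (by simp) |>.congr_deriv ?_
    simp only [mul_one, id_eq, sub_zero, mul_zero, mul_neg, sub_neg_eq_add, one_pow, div_one]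
    ring
  have hτ : HasDerivAt τ (ω - conj ω)⁻¹ ω := by
    refine ((hasDerivAt_id ω).sub_const ω).div ((hasDerivAt_id ω).sub_const (conj ω))
      (hconj ω hω) |>.congr_deriv ?_
    field_simp [hconj ω hω]
    simp only [id_eq, sub_self, sub_zero]
    ring
  have hℍ : IsOpen {z : ℂ | 0 < z.im} := isOpen_lt continuous_const continuous_im
  have hφℍ : ∀ w ∈ ball (0 : ℂ) 1, 0 < (φ w).im := fun w hw =>
    im_div_one_sub_pos hz (mem_ball_zero_iff.mp hw)
  have hφ0 : φ 0 = z := by simp [φ]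
  have hS : HasDerivAt (fun w => τ (F (φ w)))
      ((ω - conj ω)⁻¹ * (deriv F z * (z - conj z))) 0 := by
    have hF' : HasDerivAt F (deriv F z) (φ 0) := by
      rw [hφ0]; exact (hd.differentiableAt (hℍ.mem_nhds hz)).hasDerivAt
    have hτ' : HasDerivAt τ (ω - conj ω)⁻¹ (F (φ 0)) := by rwa [hφ0]
    exact hτ'.comp 0 (hF'.comp 0 hφ)
  have hdiff : DifferentiableOn ℂ (fun w => τ (F (φ w))) (ball 0 1) := by
    intro w hw
    have hw1 : 1 - w ≠ 0 := fun h => by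
      rw [show w = 1 by linear_combination -h] at hw; simp at hw
    have hφd : DifferentiableAt ℂ φ w := by fun_prop (disch := exact hw1)
    have hFd : DifferentiableAt ℂ F (φ w) := hd.differentiableAt (hℍ.mem_nhds (hφℍ w hw))
    have hτd : DifferentiableAt ℂ τ (F (φ w)) := by
      fun_prop (disch := exact hτne _ (hF _ (hφℍ w hw)))
    exact (hτd.comp w (hFd.comp w hφd)).differentiableWithinAt
  have hmaps : Set.MapsTo (fun w => τ (F (φ w))) (ball 0 1) (closedBall (τ (F (φ 0))) 1) := by
    intro w hw
    rw [hφ0, mem_closedBall, show τ (F z) = 0 by simp [τ, ω], dist_zero_right]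
    exact (norm_sub_div_sub_conj_lt_one (hF _ (hφℍ w hw)) hω).le
  have hSchwarz := norm_deriv_le_div_of_mapsTo_ball hdiff hmaps one_pos
  have hnorm : ∀ v : ℂ, 0 < v.im → ‖v - conj v‖ = 2 * v.im := fun v hv => by
    rw [sub_conj, norm_mul, norm_real, Real.norm_eq_abs, abs_of_pos (by linarith)]
    simp
  rw [hS.deriv, norm_mul, norm_mul, norm_inv, hnorm ω hω, hnorm z hz, div_one] at hSchwarz
  rw [← div_le_one hω]
  calc ‖deriv F z‖ * z.im / ω.im = (2 * ω.im)⁻¹ * (‖deriv F z‖ * (2 * z.im)) := by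
        field_simp
    _ ≤ 1 := hSchwarz

/-- Schwarz–Pick for the strip, pulled back from the half-plane along `ζ = exp (π z / R)`. -/
lemma norm_deriv_mul_sin_le_im {G : ℂ → ℂ} {R : ℝ} (hR : 0 < R)
    (hd : DifferentiableOn ℂ G {z | 0 < z.im ∧ z.im < R})
    (hG : ∀ z : ℂ, 0 < z.im → z.im < R → 0 < (G z).im) {z : ℂ} (hz₀ : 0 < z.im)
    (hzR : z.im < R) :
    ‖deriv G z‖ * Real.sin (Real.pi / R * z.im) ≤ Real.pi / R * (G z).im := by
  set r : ℝ := Real.pi / R with hr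
  have hr0 : 0 < r := div_pos Real.pi_pos hR
  have hrR : r * R = Real.pi := by rw [hr]; field_simp
  have hlog : ∀ ζ : ℂ, 0 < ζ.im → 0 < (log ζ / r).im ∧ (log ζ / r).im < R := fun ζ hζ => by
    have h0 : 0 < arg ζ := (arg_nonneg_iff.mpr hζ.le).lt_of_ne'
      (fun h => hζ.ne' (arg_eq_zero_iff.mp h).2)
    have h1 : arg ζ < Real.pi := arg_lt_pi_iff.mpr (Or.inr hζ.ne')
    rw [div_ofReal_im, log_im, lt_div_iff₀ hr0, div_lt_iff₀ hr0, zero_mul, mul_comm, hrR]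
    exact ⟨h0, h1⟩
  have hstrip : IsOpen {z : ℂ | 0 < z.im ∧ z.im < R} :=
    (isOpen_lt continuous_const continuous_im).inter (isOpen_lt continuous_im continuous_const)
  set F : ℂ → ℂ := fun ζ => G (log ζ / r)
  have hlogd : ∀ ζ : ℂ, 0 < ζ.im → HasDerivAt (fun ζ => log ζ / r) (ζ⁻¹ / r) ζ := fun ζ hζ =>
    (hasDerivAt_log (mem_slitPlane_iff.mpr (Or.inr hζ.ne'))).div_const _
  have hFd : DifferentiableOn ℂ F {ζ | 0 < ζ.im} := fun ζ hζ =>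
    ((hd.differentiableAt (hstrip.mem_nhds (hlog ζ hζ))).comp ζ
      (hlogd ζ hζ).differentiableAt).differentiableWithinAt
  set ζ := exp (r * z)
  have hrz : (↑r * z).im = r * z.im := by simp
  have hsin : 0 < Real.sin (r * z.im) := Real.sin_pos_of_pos_of_lt_pi (by positivity)
    (by rw [← hrR]; exact mul_lt_mul_of_pos_left hzR hr0)
  have hζim : ζ.im = ‖ζ‖ * Real.sin (r * z.im) := by
    simp [ζ, exp_im, norm_exp]
  have hlogζ : log ζ / r = z := by
    rw [log_exp (by rw [hrz]; nlinarith) (by rw [hrz]; nlinarith),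
      mul_div_cancel_left₀ _ (ofReal_ne_zero.mpr hr0.ne')]
  have hζn : 0 < ‖ζ‖ := norm_pos_iff.mpr (exp_ne_zero _)
  have hζ0 : 0 < ζ.im := by rw [hζim]; positivity
  have hFζ : HasDerivAt F (deriv G z * (ζ⁻¹ / r)) ζ := by
    have hGd : HasDerivAt G (deriv G z) (log ζ / r) := by
      rw [hlogζ]; exact (hd.differentiableAt (hstrip.mem_nhds ⟨hz₀, hzR⟩)).hasDerivAt
    exact hGd.comp ζ (hlogd ζ hζ0)
  have hF := norm_deriv_mul_im_le_im hFd (fun ζ hζ => hG _ (hlog ζ hζ).1 (hlog ζ hζ).2) hζ0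
  rw [hFζ.deriv, show F ζ = G z by simp [F, hlogζ], hζim] at hF
  rw [norm_mul, norm_div, norm_inv, norm_real, Real.norm_of_nonneg hr0.le] at hF
  calc ‖deriv G z‖ * Real.sin (r * z.im)
      = r * (‖deriv G z‖ * (‖ζ‖⁻¹ / r) * (‖ζ‖ * Real.sin (r * z.im))) := by field_simp
    _ ≤ r * (G z).im := by gcongr

lemma AnalyticAt.eventually_im_comp_mul_I_neg {f : ℂ → ℂ} (hf : AnalyticAt ℂ f 0)
    (hlow : ∀ i < 3, iteratedDeriv i f 0 = 0) (h₃ : 0 < (iteratedDeriv 3 f 0).re) :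
    ∀ᶠ y : ℝ in 𝓝[>] 0, (f (y * I)).im < 0 := by
  obtain ⟨F, hF, hfF⟩ := hf.exists_eq_sum_add_pow_mul 4
  set c := (iteratedDeriv 3 f 0).re
  have him : ∀ y : ℝ, (f (y * I)).im = y ^ 3 * (y * (F (y * I)).im - c / 6) := by
    intro y
    simp [c, hfF, Finset.sum_range_succ, hlow, mul_pow, Nat.factorial, ← ofReal_pow]
    ring
  have hlim : Tendsto (fun y : ℝ => y * (F (y * I)).im - c / 6) (𝓝 0)
      (𝓝 (0 * (F ((0 : ℝ) * I)).im - c / 6)) := by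
    have : ContinuousAt (fun y : ℝ => F (y * I)) 0 :=
      ContinuousAt.comp (g := F) (by simpa using hF.continuousAt) (by fun_prop)
    exact (continuousAt_id.mul (continuous_im.continuousAt.comp this)).sub continuousAt_const
  have hneg := hlim.eventually_lt_const (show _ < (0 : ℝ) by linarith)
  filter_upwards [nhdsWithin_le_nhds hneg, self_mem_nhdsWithin] with y hy hy0
  rw [him]
  exact mul_neg_of_pos_of_neg (pow_pos hy0 3) hy

lemma iteratedDeriv_sub_deriv_mul_sinh {G : ℂ → ℂ} {c : ℂ} (hG : AnalyticAt ℂ G c) (r : ℂ)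
    (n : ℕ) :
    iteratedDeriv n (fun w => r * G (c + w) - deriv G (c + w) * sinh (r * w)) 0 =
      r * iteratedDeriv n G c - ∑ i ∈ Finset.range (n + 1),
        n.choose i * iteratedDeriv (i + 1) G c * (r ^ (n - i) * iteratedDeriv (n - i) sinh 0) := by
  have hA : AnalyticAt ℂ (fun w => G (c + w)) 0 := by
    have : AnalyticAt ℂ G (c + 0) := by simpa using hG
    exact this.comp (by fun_prop)
  have hB : AnalyticAt ℂ (fun w => deriv G (c + w)) 0 := by
    have : AnalyticAt ℂ (deriv G) (c + 0) := by simpa using hG.deriv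
    exact this.comp (by fun_prop)
  have hS : ContDiff ℂ n (fun w => sinh (r * w)) := by fun_prop
  rw [iteratedDeriv_fun_sub (contDiffAt_const.mul hA.contDiffAt) (hB.contDiffAt.mul hS.contDiffAt),
    iteratedDeriv_const_mul r hA.contDiffAt, iteratedDeriv_fun_mul hB.contDiffAt hS.contDiffAt,
    iteratedDeriv_comp_const_add]
  simp only [iteratedDeriv_comp_const_add, add_zero, iteratedDeriv_succ']
  congr 1
  refine Finset.sum_congr rfl fun i _ => ?_
  simp [iteratedDeriv_comp_const_mul contDiff_sinh]

lemma neg_sq_div_two_le_re_iteratedDeriv_three {G : ℂ → ℂ} {R : ℝ} (hR : 0 < R)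
    (hd : DifferentiableOn ℂ G {z | 0 < z.im ∧ z.im < R})
    (hG : ∀ z : ℂ, 0 < z.im → z.im < R → 0 < (G z).im) {x : ℝ} (hx : AnalyticAt ℂ G x)
    (h₀ : G x = 0) (h₁ : deriv G x = 1) (h₂ : iteratedDeriv 2 G x = 0) :
    -(Real.pi / R) ^ 2 / 2 ≤ (iteratedDeriv 3 G x).re := by
  by_contra! h
  set r := Real.pi / R
  have hr0 : 0 < r := div_pos Real.pi_pos hR
  set Φ : ℂ → ℂ := fun w => r * G (x + w) - deriv G (x + w) * sinh (r * w)
  have hΦ : AnalyticAt ℂ Φ 0 := by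
    have hA : AnalyticAt ℂ G (x + 0) := by simpa using hx
    have hB : AnalyticAt ℂ (deriv G) (x + 0) := by simpa using hx.deriv
    exact (analyticAt_const.mul (hA.comp (by fun_prop))).sub
      ((hB.comp (by fun_prop)).mul (by fun_prop))
  have hderivs := iteratedDeriv_sub_deriv_mul_sinh hx r
  have hlow : ∀ i < 3, iteratedDeriv i Φ 0 = 0 := by
    intro i hi
    interval_cases i <;> simp [Φ, hderivs, Finset.sum_range_succ, h₀, h₁, h₂]
  have h₃ : 0 < (iteratedDeriv 3 Φ 0).re := by
    simp [Φ, hderivs, Finset.sum_range_succ, h₁, h₂, ← ofReal_pow]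
    nlinarith [mul_lt_mul_of_pos_left h hr0]
  have hneg := hΦ.eventually_im_comp_mul_I_neg hlow h₃
  have hnonneg : ∀ᶠ y : ℝ in 𝓝[>] 0, 0 ≤ (Φ (y * I)).im := by
    filter_upwards [Ioo_mem_nhdsGT hR] with y hy
    have hsp := norm_deriv_mul_sin_le_im hR hd hG (z := x + y * I) (by simpa using hy.1)
      (by simpa using hy.2)
    have hsin : 0 ≤ Real.sin (r * y) := Real.sin_nonneg_of_nonneg_of_le_pi
      (by nlinarith [hy.1]) (by rw [← div_mul_cancel₀ Real.pi hR.ne']; nlinarith [hy.2])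
    simp only [Φ, ← mul_assoc, ← ofReal_mul, sinh_mul_I, ← ofReal_sin]
    simp only [add_im, ofReal_im, mul_im, ofReal_re, I_im, mul_one, I_re, mul_zero, add_zero,
      zero_add, sub_im, zero_mul, mul_re, sub_zero, sub_nonneg] at hsp ⊢
    exact (mul_le_mul_of_nonneg_right (re_le_norm _) hsin).trans hsp
  obtain ⟨y, hy₁, hy₂⟩ := (hneg.and hnonneg).exists
  linarith

lemma neg_pi_sq_le_of_ne_zero {θ f₁ f₂ : ℝ → ℝ} {H : ℂ → ℂ} {R W x : ℝ} (hR : 0 < R)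
    (h₁ : IsSolution θ f₁) (h₂ : IsSolution θ f₂)
    (hW : f₁ x * deriv f₂ x - deriv f₁ x * f₂ x = W) (hW0 : W ≠ 0)
    (hH : ∀ t : ℝ, f₁ t ≠ 0 → H t = ((f₂ t / f₁ t : ℝ) : ℂ))
    (hHd : DifferentiableOn ℂ H {z : ℂ | |z.im| < R ∧ ∀ t : ℝ, f₁ t = 0 → z ≠ t})
    (hpick : ∀ z : ℂ, 0 < z.im → z.im < R → 0 < W * (H z).im * z.im) (hx : f₁ x ≠ 0) :
    -(Real.pi ^ 2 / (4 * R ^ 2)) ≤ θ x := by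
  set a := deriv f₂ x / W
  set b := -deriv f₁ x / W
  set c := -f₂ x / W
  set d := f₁ x / W
  set u : ℝ → ℝ := fun t => a * f₁ t + b * f₂ t
  set v : ℝ → ℝ := fun t => c * f₁ t + d * f₂ t
  have hfund : IsFundPair θ x u v := h₁.isFundPair h₂ hW hW0
  have hdet : d * a - c * b = W⁻¹ := by
    simp only [a, b, c, d]; field_simp; linear_combination hW
  set G : ℂ → ℂ := fun z => (d * H z + c) / (b * H z + a)
  have hHim : ∀ z : ℂ, 0 < z.im → z.im < R → 0 < W⁻¹ * (H z).im := fun z h0 hR' => by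
    have hWH := pos_of_mul_pos_left (hpick z h0 hR') h0.le
    rw [show W⁻¹ * (H z).im = W * (H z).im / W ^ 2 by field_simp]
    positivity
  have hden : ∀ z : ℂ, 0 < z.im → z.im < R → (b * H z + a : ℂ) ≠ 0 := fun z h0 hR' =>
    real_mobius_denom_ne_zero (by rw [hdet]; exact inv_ne_zero hW0)
      (right_ne_zero_of_mul (hHim z h0 hR').ne')
  have hstrip : DifferentiableOn ℂ G {z | 0 < z.im ∧ z.im < R} := by
    have hHs : DifferentiableOn ℂ H {z | 0 < z.im ∧ z.im < R} := hHd.mono fun z hz =>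
      ⟨abs_lt.mpr ⟨by linarith [hz.1], hz.2⟩, fun t _ h => by simpa [h] using hz.1.ne'⟩
    exact ((hHs.const_mul _).add_const _).div ((hHs.const_mul _).add_const _)
      fun z hz => hden z hz.1 hz.2
  have hGim : ∀ z : ℂ, 0 < z.im → z.im < R → 0 < (G z).im := fun z h0 hR' => by
    simp only [G]
    rw [im_div_real_mobius, hdet]
    exact div_pos (hHim z h0 hR') (normSq_pos.mpr (hden z h0 hR'))
  have hf₁ne : ∀ᶠ t in 𝓝 x, f₁ t ≠ 0 := h₁.differentiable.continuous.continuousAt.eventually_ne hx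
  have hxnhds : ∀ᶠ z : ℂ in 𝓝 (x : ℂ), |z.im| < R ∧ ∀ t : ℝ, f₁ t = 0 → z ≠ t := by
    obtain ⟨ε, hε, hfε⟩ := Metric.eventually_nhds_iff.mp hf₁ne
    refine Metric.eventually_nhds_iff.mpr ⟨min ε R, lt_min hε hR, fun z hz => ⟨?_, ?_⟩⟩
    · calc |z.im| = |(z - x).im| := by simp
        _ ≤ ‖z - x‖ := abs_im_le_norm _
        _ < R := by rw [← dist_eq]; exact hz.trans_le (min_le_right _ _)
    · rintro t ht rfl
      exact hfε (by rw [← isometry_ofReal.dist_eq]; exact hz.trans_le (min_le_left _ _)) ht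
  have hHx : AnalyticAt ℂ H x := analyticAt_iff_eventually_differentiableAt.mpr <| by
    filter_upwards [hxnhds.eventually_nhds] with z hz using hHd.differentiableAt hz
  have hdenx : (b * H x + a : ℂ) ≠ 0 := by
    have : b * (f₂ x / f₁ x) + a = u x / f₁ x := by simp only [u]; field_simp; ring
    rw [hH x hx]
    exact_mod_cast this ▸ div_ne_zero (by rw [hfund.2.2.1]; exact one_ne_zero) hx
  have hGx : AnalyticAt ℂ G x :=
    ((analyticAt_const.mul hHx).add analyticAt_const).div
      ((analyticAt_const.mul hHx).add analyticAt_const) hdenx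
  have hGreal : ∀ᶠ t : ℝ in 𝓝 x, G t = (v t / u t : ℝ) := by
    filter_upwards [hf₁ne] with t ht
    have : (d * (f₂ t / f₁ t) + c) / (b * (f₂ t / f₁ t) + a) = v t / u t := by
      simp only [u, v]
      rw [← mul_div_mul_right _ _ ht]
      congr 1 <;> field_simp <;> ring
    simp only [G, hH t ht]
    exact_mod_cast this
  obtain ⟨hq₀, hq₁, hq₂, hq₃⟩ := hfund.quotient_derivs
  have hderiv := iteratedDeriv_eq_ofReal_of_eventuallyEq hGx hGreal
  have := neg_sq_div_two_le_re_iteratedDeriv_three hR hstrip hGim hGx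
    (by simpa [hq₀] using hderiv 0) (by simpa [hq₁] using hderiv 1)
    (by simpa [iteratedDeriv_succ, hq₂] using hderiv 2)
  have h₃ : (iteratedDeriv 3 G x).re = 2 * θ x := by simp [hderiv 3, iteratedDeriv_succ, hq₃]
  rw [h₃, div_pow] at this
  linarith [show Real.pi ^ 2 / (4 * R ^ 2) = Real.pi ^ 2 / R ^ 2 / 4 by ring]

end

noncomputable section

open MeasureTheory Filter

/-- If θ is smooth, `0 < R`, and Hypothesis (H_R) holds, then
`θ(x) ≥ -π²/(4R²)` for every `x`. -/
theorem stmt6 (θ : ℝ → ℝ) (hθ : ContDiff ℝ (⊤ : ℕ∞) θ) (R : ℝ) (hR : 0 < R)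
    (hHyp : HypR θ R) :
    ∀ x : ℝ, -(Real.pi ^ 2 / (4 * R ^ 2)) ≤ θ x := by
  obtain ⟨f₁, f₂, H, h₁, h₂, hW0, hH, hHd, -, hpick⟩ := hHyp
  have hW : ∀ t, f₁ t * deriv f₂ t - deriv f₁ t * f₂ t =
      f₁ 0 * deriv f₂ 0 - deriv f₁ 0 * f₂ 0 := fun t => h₁.wronskian_eq h₂ t 0
  refine const_le_of_le_off_simple_zeros h₁.differentiable (fun t ht h => hW0 ?_) hθ.continuous
    fun t ht => neg_pi_sq_le_of_ne_zero hR h₁ h₂ (hW t) hW0 hH hHd hpick ht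
  rw [← hW t, ht, h]
  ring

end
end

section
/- Let θ : ℝ → ℝ be smooth. Then for every x ∈ ℝ: 𝒮_1^θ(x) = 1, 𝒮_2^θ(x) = 0, 𝒮_3^θ(x) = 2·θ(x), 𝒮_4^θ(x) = 2·θ'(x), 𝒮_5^θ(x) = 2·θ''(x) + 16·θ(x)², 𝒮_6^θ(x) = 2·θ'''(x) + 52·θ(x)·θ'(x), and 𝒮_7^θ(x) = 2·θ⁽⁴⁾(x) + 76·θ(x)·θ''(x) + 52·θ'(x)² + 272·θ(x)³. -/
noncomputable section

open MeasureTheory Filter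

/-!
Write `u = f_{x,1}`, `v = f_{x,2}` and `h = v / u`. Differentiating `u'' = -θ u` and `v'' = -θ v`
with the Leibniz rule expresses all derivatives of `u` and `v` at `x` through those of `θ`, starting
from `u(x) = v'(x) = 1`, `u'(x) = v(x) = 0`. Near `x` we have `v = u h`, so the Leibniz rule once
more gives `v^{(n)}(x) = ∑ₖ C(n,k) u^{(k)}(x) h^{(n-k)}(x)`; since `u(x) = 1` this is a triangular
system for the `h^{(n)}(x)`, which is solved one order at a time.
-/

open Finset

/-- The recursion satisfied by the derivatives `c n = f^{(n)}(x)` of a solution of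
`f'' + θ f = 0`, where `a k = θ^{(k)}(x)`. -/
def HillRecurrence (a c : ℕ → ℝ) : Prop :=
  ∀ n, c (n + 2) = -∑ k ∈ range (n + 1), (n.choose k : ℝ) * a k * c (n - k)

theorem IsSolution.contDiffAt {θ f : ℝ → ℝ} (hf : IsSolution θ f) (n : ℕ) (x : ℝ) :
    ContDiffAt ℝ n f x :=
  (hf.1.of_le (by exact_mod_cast le_top)).contDiffAt

theorem IsSolution.hillRecurrence {θ f : ℝ → ℝ} (hf : IsSolution θ f) {x : ℝ}
    (hθ : ∀ n : ℕ, ContDiffAt ℝ n θ x) :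
    HillRecurrence (fun k => iteratedDeriv k θ x) (fun k => iteratedDeriv k f x) := by
  intro n
  dsimp only
  have hf'' : deriv (deriv f) = -(θ * f) := funext fun t => by
    simpa [eq_neg_iff_add_eq_zero] using hf.2 t
  rw [iteratedDeriv_succ', iteratedDeriv_succ', hf'', iteratedDeriv_neg,
    iteratedDeriv_mul (hθ n) (hf.contDiffAt n x)]

theorem iteratedDeriv_eq_sum_mul_iteratedDeriv_div {𝕜 : Type*} [NontriviallyNormedField 𝕜]
    {u v : 𝕜 → 𝕜} {x : 𝕜} {n : ℕ} (hu : ContDiffAt 𝕜 n u x) (hv : ContDiffAt 𝕜 n v x)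
    (hux : u x ≠ 0) :
    iteratedDeriv n v x = ∑ k ∈ range (n + 1),
      (n.choose k : 𝕜) * iteratedDeriv k u x * iteratedDeriv (n - k) (fun t => v t / u t) x := by
  have hvu : v =ᶠ[nhds x] u * fun t => v t / u t := by
    filter_upwards [hu.continuousAt.eventually_ne hux] with t ht
    simp [mul_div_cancel₀ _ ht]
  rw [hvu.iteratedDeriv_eq]
  exact iteratedDeriv_mul hu (hv.div hu hux)

namespace HillRecurrence

variable {a c : ℕ → ℝ}

theorem values_of_one_zero (hc : HillRecurrence a c) (hc0 : c 0 = 1) (hc1 : c 1 = 0) :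
    c 2 = -a 0 ∧ c 3 = -a 1 ∧ c 4 = a 0 ^ 2 - a 2 ∧ c 5 = 4 * a 0 * a 1 - a 3 ∧
      c 6 = -a 0 ^ 3 + 7 * a 0 * a 2 + 4 * a 1 ^ 2 - a 4 := by
  have c2 : c 2 = -a 0 := by
    rw [hc 0]; simp only [sum_range_succ, sum_range_zero, Nat.choose, hc0]; ring
  have c3 : c 3 = -a 1 := by
    rw [hc 1]; simp only [sum_range_succ, sum_range_zero, Nat.choose, hc0, hc1]; ring
  have c4 : c 4 = a 0 ^ 2 - a 2 := by
    rw [hc 2]; simp only [sum_range_succ, sum_range_zero, Nat.choose, hc0, hc1, c2]; ring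
  have c5 : c 5 = 4 * a 0 * a 1 - a 3 := by
    rw [hc 3]; simp only [sum_range_succ, sum_range_zero, Nat.choose, hc0, hc1, c2, c3]; ring
  refine ⟨c2, c3, c4, c5, ?_⟩
  rw [hc 4]; simp only [sum_range_succ, sum_range_zero, Nat.choose, hc0, hc1, c2, c3, c4]; ring

theorem values_of_zero_one (hc : HillRecurrence a c) (hc0 : c 0 = 0) (hc1 : c 1 = 1) :
    c 2 = 0 ∧ c 3 = -a 0 ∧ c 4 = -2 * a 1 ∧ c 5 = a 0 ^ 2 - 3 * a 2 ∧
      c 6 = 6 * a 0 * a 1 - 4 * a 3 ∧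
      c 7 = -a 0 ^ 3 + 13 * a 0 * a 2 + 10 * a 1 ^ 2 - 5 * a 4 := by
  have c2 : c 2 = 0 := by
    rw [hc 0]; simp only [sum_range_succ, sum_range_zero, Nat.choose, hc0]; ring
  have c3 : c 3 = -a 0 := by
    rw [hc 1]; simp only [sum_range_succ, sum_range_zero, Nat.choose, hc0, hc1]; ring
  have c4 : c 4 = -2 * a 1 := by
    rw [hc 2]; simp only [sum_range_succ, sum_range_zero, Nat.choose, hc0, hc1, c2]; ring
  have c5 : c 5 = a 0 ^ 2 - 3 * a 2 := by
    rw [hc 3]; simp only [sum_range_succ, sum_range_zero, Nat.choose, hc0, hc1, c2, c3]; ring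
  have c6 : c 6 = 6 * a 0 * a 1 - 4 * a 3 := by
    rw [hc 4]; simp only [sum_range_succ, sum_range_zero, Nat.choose, hc0, hc1, c2, c3, c4]; ring
  refine ⟨c2, c3, c4, c5, c6, ?_⟩
  rw [hc 5]; simp only [sum_range_succ, sum_range_zero, Nat.choose, hc0, hc1, c2, c3, c4, c5]; ring

theorem quotient_values {U V H : ℕ → ℝ} (hU : HillRecurrence a U) (hV : HillRecurrence a V)
    (hU0 : U 0 = 1) (hU1 : U 1 = 0) (hV0 : V 0 = 0) (hV1 : V 1 = 1)
    (hVUH : ∀ n, V n = ∑ k ∈ range (n + 1), (n.choose k : ℝ) * U k * H (n - k)) :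
    H 1 = 1 ∧ H 2 = 0 ∧ H 3 = 2 * a 0 ∧ H 4 = 2 * a 1 ∧
      H 5 = 2 * a 2 + 16 * a 0 ^ 2 ∧ H 6 = 2 * a 3 + 52 * a 0 * a 1 ∧
      H 7 = 2 * a 4 + 76 * a 0 * a 2 + 52 * a 1 ^ 2 + 272 * a 0 ^ 3 := by
  obtain ⟨U2, U3, U4, U5, U6⟩ := hU.values_of_one_zero hU0 hU1
  obtain ⟨V2, V3, V4, V5, V6, V7⟩ := hV.values_of_zero_one hV0 hV1
  have H0 : H 0 = 0 := by
    have h := hVUH 0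
    simp only [sum_range_succ, sum_range_zero, Nat.choose, hU0, hV0] at h
    linear_combination -h
  have H1 : H 1 = 1 := by
    have h := hVUH 1
    simp only [sum_range_succ, sum_range_zero, Nat.choose, hU0, hU1, hV1, H0] at h
    linear_combination -h
  have H2 : H 2 = 0 := by
    have h := hVUH 2
    simp only [sum_range_succ, sum_range_zero, Nat.choose, hU0, hU1, U2, V2, H0, H1] at h
    linear_combination -h
  have H3 : H 3 = 2 * a 0 := by
    have h := hVUH 3
    simp only [sum_range_succ, sum_range_zero, Nat.choose, hU0, hU1, U2, U3, V3, H0, H1, H2] at h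
    linear_combination -h
  have H4 : H 4 = 2 * a 1 := by
    have h := hVUH 4
    simp only [sum_range_succ, sum_range_zero, Nat.choose, hU0, hU1, U2, U3, U4, V4,
      H0, H1, H2, H3] at h
    linear_combination -h
  have H5 : H 5 = 2 * a 2 + 16 * a 0 ^ 2 := by
    have h := hVUH 5
    simp only [sum_range_succ, sum_range_zero, Nat.choose, hU0, hU1, U2, U3, U4, U5, V5,
      H0, H1, H2, H3, H4] at h
    linear_combination -h
  have H6 : H 6 = 2 * a 3 + 52 * a 0 * a 1 := by
    have h := hVUH 6
    simp only [sum_range_succ, sum_range_zero, Nat.choose, hU0, hU1, U2, U3, U4, U5, U6, V6,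
      H0, H1, H2, H3, H4, H5] at h
    linear_combination -h
  refine ⟨H1, H2, H3, H4, H5, H6, ?_⟩
  have h := hVUH 7
  simp only [sum_range_succ, sum_range_zero, Nat.choose, hU0, hU1, U2, U3, U4, U5, U6, V7,
    H0, H1, H2, H3, H4, H5, H6] at h
  linear_combination -h

end HillRecurrence

/-- Explicit formulas for the first seven higher order Schwarzians:
`𝒮₁ = 1`, `𝒮₂ = 0`, `𝒮₃ = 2θ`, `𝒮₄ = 2θ'`, `𝒮₅ = 2θ'' + 16θ²`,
`𝒮₆ = 2θ''' + 52θθ'`, `𝒮₇ = 2θ⁗ + 76θθ'' + 52(θ')² + 272θ³`. -/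
theorem stmt9 (θ : ℝ → ℝ) (hθ : ContDiff ℝ (⊤ : ℕ∞) θ) :
    ∀ (x : ℝ) (f₁ f₂ : ℝ → ℝ), IsFundPair θ x f₁ f₂ →
      iteratedDeriv 1 (fun t => f₂ t / f₁ t) x = 1 ∧
      iteratedDeriv 2 (fun t => f₂ t / f₁ t) x = 0 ∧
      iteratedDeriv 3 (fun t => f₂ t / f₁ t) x = 2 * θ x ∧
      iteratedDeriv 4 (fun t => f₂ t / f₁ t) x = 2 * deriv θ x ∧
      iteratedDeriv 5 (fun t => f₂ t / f₁ t) x =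
        2 * iteratedDeriv 2 θ x + 16 * θ x ^ 2 ∧
      iteratedDeriv 6 (fun t => f₂ t / f₁ t) x =
        2 * iteratedDeriv 3 θ x + 52 * θ x * deriv θ x ∧
      iteratedDeriv 7 (fun t => f₂ t / f₁ t) x =
        2 * iteratedDeriv 4 θ x + 76 * θ x * iteratedDeriv 2 θ x +
          52 * (deriv θ x) ^ 2 + 272 * θ x ^ 3 := by
  rintro x f₁ f₂ ⟨h₁, h₂, h₁x, h₁'x, h₂x, h₂'x⟩
  have hθx : ∀ n : ℕ, ContDiffAt ℝ n θ x :=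
    fun n => (hθ.of_le (by exact_mod_cast le_top)).contDiffAt
  have hf₁x : f₁ x ≠ 0 := by simp [h₁x]
  have key := HillRecurrence.quotient_values
    (H := fun k => iteratedDeriv k (fun t => f₂ t / f₁ t) x)
    (h₁.hillRecurrence hθx) (h₂.hillRecurrence hθx)
    (by simpa using h₁x) (by simpa using h₁'x) (by simpa using h₂x) (by simpa using h₂'x)
    (fun n => iteratedDeriv_eq_sum_mul_iteratedDeriv_div (h₁.contDiffAt n x)
      (h₂.contDiffAt n x) hf₁x)
  simpa only [iteratedDeriv_zero, iteratedDeriv_one] using key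

end
end

section
/- Let θ : ℝ → ℝ be smooth. For each n ≥ 1 the function x ↦ 𝒮_n^θ(x) is smooth on ℝ, and for every integer n ≥ 1 and every x ∈ ℝ the recursion 𝒮_{n+1}^θ(x) = (d/dx)𝒮_n^θ(x) + θ(x)·Σ_{k=1}^{n−1} C(n,k)·𝒮_k^θ(x)·𝒮_{n−k}^θ(x) holds, where C(n,k) denotes the binomial coefficient. -/
/-!
Fix solutions `f₁, f₂` of `f'' + θ f = 0` with Wronskian `1`. Global solutions exist because the
Prüfer angle `φ` of `(f', f)` solves `φ' = cos² φ + θ sin² φ`, whose right-hand side is bounded.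
The fundamental pair at `x` is a combination of `f₁, f₂` with coefficients smooth in `x`, so
`h_x(t) = K(x, t)` for a kernel `K` that is smooth near the diagonal, and `𝒮ₙ(x) = ∂₂ⁿ K(x, x)`
is smooth. Moving the base point, `K` solves the Riccati equation `∂₁ K = -1 - θ(x) K²`, and it
vanishes on the diagonal. Hence `𝒮ₙ' = ∂₁∂₂ⁿ K + 𝒮ₙ₊₁` on the diagonal, and by symmetry of mixed
partials `∂₁∂₂ⁿ K = ∂₂ⁿ ∂₁ K = -θ ∂₂ⁿ (K²)`, which Leibniz' rule expands into the sum.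
-/

open Set
open scoped NNReal

section GlobalExistence

variable {E : Type*} [NormedAddCommGroup E] [NormedSpace ℝ E] {v : ℝ → E → E}

theorem exists_forall_mem_Ioo_hasDerivAt_of_bounded_lipschitz [CompleteSpace E]
    (hv : ∀ x, Continuous (v · x)) {T : ℝ} (hT : 0 ≤ T) {L K : ℝ≥0}
    (hbd : ∀ t ∈ Icc (-T) T, LipschitzWith K (v t) ∧ ∀ x, ‖v t x‖ ≤ L) (x₀ : E) :
    ∃ α : ℝ → E, α 0 = x₀ ∧ ∀ t ∈ Ioo (-T) T, HasDerivAt α (v t (α t)) t := by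
  have hpl : IsPicardLindelof v (tmin := -T) (tmax := T) ⟨0, by constructor <;> linarith⟩
      x₀ (L * T.toNNReal) 0 L K :=
    { lipschitzOnWith := fun t ht => (hbd t ht).1.lipschitzOnWith
      continuousOn := fun x _ => (hv x).continuousOn
      norm_le := fun t ht x _ => (hbd t ht).2 x
      mul_max_le := by simp [hT] }
  obtain ⟨α, hα0, hα⟩ := hpl.exists_eq_forall_mem_Icc_hasDerivWithinAt₀
  exact ⟨α, hα0, fun t ht =>
    (hα t (Ioo_subset_Icc_self ht)).hasDerivAt (Icc_mem_nhds ht.1 ht.2)⟩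

theorem exists_forall_hasDerivAt_of_bounded_lipschitz [CompleteSpace E]
    (hv : ∀ x, Continuous (v · x))
    (hbd : ∀ T : ℝ, ∃ L K : ℝ≥0, ∀ t ∈ Icc (-T) T, LipschitzWith K (v t) ∧ ∀ x, ‖v t x‖ ≤ L)
    (x₀ : E) : ∃ α : ℝ → E, α 0 = x₀ ∧ ∀ t, HasDerivAt α (v t (α t)) t := by
  choose L K hLK using hbd
  choose sol hsol0 hsol using fun n : ℕ =>
    exists_forall_mem_Ioo_hasDerivAt_of_bounded_lipschitz hv (T := n + 1) (by positivity)
      (hLK _) x₀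
  have compat : ∀ m n : ℕ, m ≤ n → EqOn (sol m) (sol n) (Ioo (-(m + 1)) (m + 1)) := by
    intro m n hmn
    have hsub : Ioo (-(m + 1) : ℝ) (m + 1) ⊆ Ioo (-(n + 1)) (n + 1) :=
      Ioo_subset_Ioo (by gcongr) (by gcongr)
    exact ODE_solution_unique_of_mem_Ioo (s := fun _ => univ) (t₀ := 0)
      (fun t ht => (hLK _ t (Ioo_subset_Icc_self ht)).1.lipschitzOnWith)
      ⟨by linarith, by linarith⟩ (fun t ht => ⟨hsol m t ht, mem_univ _⟩)
      (fun t ht => ⟨hsol n t (hsub ht), mem_univ _⟩) (by rw [hsol0, hsol0])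
  have mem_Ioo_ceil : ∀ s : ℝ, s ∈ Ioo (-(⌈|s|⌉₊ + 1 : ℝ)) (⌈|s|⌉₊ + 1) := fun s =>
    abs_lt.1 ((Nat.le_ceil _).trans_lt (lt_add_one _))
  refine ⟨fun t => sol ⌈|t|⌉₊ t, by simp [hsol0], fun t => ?_⟩
  set N := ⌈|t|⌉₊
  have hglue : (fun s => sol ⌈|s|⌉₊ s) =ᶠ[nhds t] sol N := by
    filter_upwards [Ioo_mem_nhds (mem_Ioo_ceil t).1 (mem_Ioo_ceil t).2] with s hs
    rcases le_total ⌈|s|⌉₊ N with h | h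
    · exact compat _ _ h (mem_Ioo_ceil s)
    · exact (compat _ _ h hs).symm
  exact (hsol N t (mem_Ioo_ceil t)).congr_of_eventuallyEq hglue |>.congr_deriv
    (by rw [hglue.eq_of_nhds])

end GlobalExistence

theorem contDiff_of_forall_hasDerivAt {E : Type*} [NormedAddCommGroup E] [NormedSpace ℝ E]
    [CompleteSpace E] {v : ℝ → E → E} {α : ℝ → E} {n : ℕ∞}
    (hv : ContDiff ℝ n (Function.uncurry v)) (hα : ∀ t, HasDerivAt α (v t (α t)) t) :
    ContDiff ℝ n α :=
  contDiff_iff_contDiffAt.2 fun t =>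
    (ODE.contDiffOn_enat_Icc_of_hasDerivWithinAt (u := univ) hv.contDiffOn
      (fun s _ => (hα s).hasDerivWithinAt) (mapsTo_univ _ _)).contDiffAt
      (Icc_mem_nhds (sub_one_lt t) (lt_add_one t))

section Prufer

open Real

variable {θ : ℝ → ℝ}

noncomputable def pruferField (θ : ℝ → ℝ) (t x : ℝ) : ℝ := 1 + (θ t - 1) * sin x ^ 2

lemma hasDerivAt_pruferField (t x : ℝ) :
    HasDerivAt (pruferField θ t) ((θ t - 1) * sin (2 * x)) x := by
  refine ((((hasDerivAt_sin x).pow 2).const_mul (θ t - 1)).const_add 1).congr_deriv ?_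
  rw [sin_two_mul]; push_cast; ring

lemma lipschitzWith_pruferField (t : ℝ) : LipschitzWith ‖θ t - 1‖₊ (pruferField θ t) := by
  refine lipschitzWith_of_nnnorm_deriv_le (fun x => (hasDerivAt_pruferField t x).differentiableAt)
    fun x => ?_
  rw [(hasDerivAt_pruferField t x).deriv, nnnorm_mul]
  exact mul_le_of_le_one_right bot_le (by simpa [← NNReal.coe_le_coe] using abs_sin_le_one _)

lemma norm_pruferField_le (t x : ℝ) : ‖pruferField θ t x‖ ≤ 1 + ‖θ t - 1‖ := by
  have hsin : ‖sin x ^ 2‖ ≤ 1 := by simp [sin_sq_le_one x]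
  calc ‖pruferField θ t x‖ ≤ ‖(1 : ℝ)‖ + ‖θ t - 1‖ * ‖sin x ^ 2‖ :=
        (norm_add_le _ _).trans_eq (by rw [norm_mul])
    _ ≤ 1 + ‖θ t - 1‖ := by
      rw [norm_one]; gcongr; exact mul_le_of_le_one_right (norm_nonneg _) hsin

lemma exists_forall_hasDerivAt_pruferField (hθ : Continuous θ) (φ₀ : ℝ) :
    ∃ φ : ℝ → ℝ, φ 0 = φ₀ ∧ ∀ t, HasDerivAt φ (pruferField θ t (φ t)) t := by
  refine exists_forall_hasDerivAt_of_bounded_lipschitz (v := pruferField θ)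
    (fun x => continuous_const.add ((hθ.sub continuous_const).mul continuous_const))
    (fun T => ?_) φ₀
  obtain ⟨C, hC⟩ := isCompact_Icc.exists_bound_of_continuousOn (s := Icc (-T) T)
    (hθ.sub continuous_const).continuousOn
  refine ⟨(1 + C).toNNReal, C.toNNReal, fun t ht => ⟨?_, fun x => ?_⟩⟩
  · exact (lipschitzWith_pruferField t).weaken
      (by simpa [← norm_toNNReal] using Real.toNNReal_le_toNNReal (hC t ht))
  · exact (norm_pruferField_le t x).trans
      ((add_le_add_right (hC t ht) 1).trans (Real.le_coe_toNNReal _))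

lemma contDiff_uncurry_pruferField (hθ : ContDiff ℝ (⊤ : ℕ∞) θ) :
    ContDiff ℝ (⊤ : ℕ∞) (Function.uncurry (pruferField θ)) :=
  contDiff_const.add (((hθ.comp contDiff_fst).sub contDiff_const).mul
    ((contDiff_sin.comp contDiff_snd).pow 2))

theorem exists_isSolution_sin_cos (hθ : ContDiff ℝ (⊤ : ℕ∞) θ) (φ₀ : ℝ) :
    ∃ f : ℝ → ℝ, IsSolution θ f ∧ f 0 = sin φ₀ ∧ deriv f 0 = cos φ₀ := by
  obtain ⟨φ, hφ₀, hφ⟩ := exists_forall_hasDerivAt_pruferField hθ.continuous φ₀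
  have hφs : ContDiff ℝ (⊤ : ℕ∞) φ :=
    contDiff_of_forall_hasDerivAt (contDiff_uncurry_pruferField hθ) hφ
  -- `f = ρ sin φ` and `f' = ρ cos φ` with amplitude `ρ = exp G`, where `G' = g`
  set g : ℝ → ℝ := fun t => (1 - θ t) * sin (φ t) * cos (φ t)
  have hgs : ContDiff ℝ (⊤ : ℕ∞) g :=
    ((contDiff_const.sub hθ).mul (contDiff_sin.comp hφs)).mul (contDiff_cos.comp hφs)
  set G : ℝ → ℝ := fun t => ∫ s in (0 : ℝ)..t, g s
  have hG : ∀ t, HasDerivAt G (g t) t := fun t =>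
    (hgs.continuous.integral_hasStrictDerivAt 0 t).hasDerivAt
  have hGs : ContDiff ℝ (⊤ : ℕ∞) G :=
    contDiff_of_forall_hasDerivAt (v := fun t _ => g t) (hgs.comp contDiff_fst) hG
  have hf : ∀ t, HasDerivAt (fun t => exp (G t) * sin (φ t)) (exp (G t) * cos (φ t)) t := by
    intro t
    refine ((hG t).exp.mul (hφ t).sin).congr_deriv ?_
    simp only [pruferField, g]
    ring
  have hf' : ∀ t, HasDerivAt (fun t => exp (G t) * cos (φ t))
      (-θ t * (exp (G t) * sin (φ t))) t := by
    intro t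
    refine ((hG t).exp.mul (hφ t).cos).congr_deriv ?_
    simp only [pruferField, g]
    linear_combination (1 - θ t) * exp (G t) * sin (φ t) * sin_sq_add_cos_sq (φ t)
  have hderiv : deriv (fun t => exp (G t) * sin (φ t)) = fun t => exp (G t) * cos (φ t) :=
    funext fun t => (hf t).deriv
  have hG₀ : G 0 = 0 := intervalIntegral.integral_same
  refine ⟨fun t => exp (G t) * sin (φ t),
    ⟨(contDiff_exp.comp hGs).mul (contDiff_sin.comp hφs), fun t => ?_⟩, ?_, ?_⟩
  · rw [hderiv, (hf' t).deriv]; ring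
  · simp [hG₀, hφ₀]
  · simp [hderiv, hG₀, hφ₀]

theorem exists_isFundPair_zero (hθ : ContDiff ℝ (⊤ : ℕ∞) θ) :
    ∃ f₁ f₂ : ℝ → ℝ, IsFundPair θ 0 f₁ f₂ := by
  obtain ⟨f₁, h₁, h₁₀, h₁₀'⟩ := exists_isSolution_sin_cos hθ (π / 2)
  obtain ⟨f₂, h₂, h₂₀, h₂₀'⟩ := exists_isSolution_sin_cos hθ 0
  exact ⟨f₁, f₂, h₁, h₂, by simp [h₁₀], by simp [h₁₀'], by simp [h₂₀], by simp [h₂₀']⟩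

end Prufer

namespace IsSolution

variable {θ f f₁ f₂ : ℝ → ℝ}

lemma hasDerivAt (hf : IsSolution θ f) (t : ℝ) : HasDerivAt f (deriv f t) t :=
  (hf.1.differentiable (by simp) t).hasDerivAt

lemma contDiff_deriv (hf : IsSolution θ f) : ContDiff ℝ (⊤ : ℕ∞) (deriv f) := by
  simpa using hf.1.iterate_deriv 1

lemma hasDerivAt_deriv (hf : IsSolution θ f) (t : ℝ) :
    HasDerivAt (deriv f) (-(θ t * f t)) t :=
  (hf.contDiff_deriv.differentiable (by simp) t).hasDerivAt.congr_deriv (by linarith [hf.2 t])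

lemma wronskian_eq_s10 (h₁ : IsSolution θ f₁) (h₂ : IsSolution θ f₂) (x y : ℝ) :
    f₁ x * deriv f₂ x - deriv f₁ x * f₂ x = f₁ y * deriv f₂ y - deriv f₁ y * f₂ y := by
  have hW : ∀ t, HasDerivAt (fun t => f₁ t * deriv f₂ t - deriv f₁ t * f₂ t) 0 t := fun t =>
    (((h₁.hasDerivAt t).mul (h₂.hasDerivAt_deriv t)).sub
      ((h₁.hasDerivAt_deriv t).mul (h₂.hasDerivAt t))).congr_deriv (by ring)
  exact is_const_of_deriv_eq_zero (fun t => (hW t).differentiableAt) (fun t => (hW t).deriv) x y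

lemma linearCombination (h₁ : IsSolution θ f₁) (h₂ : IsSolution θ f₂) (a b : ℝ) :
    IsSolution θ (fun t => a * f₁ t + b * f₂ t) ∧
      deriv (fun t => a * f₁ t + b * f₂ t) = fun t => a * deriv f₁ t + b * deriv f₂ t := by
  have hderiv : deriv (fun t => a * f₁ t + b * f₂ t) = fun t => a * deriv f₁ t + b * deriv f₂ t :=
    funext fun t => (((h₁.hasDerivAt t).const_mul a).add ((h₂.hasDerivAt t).const_mul b)).deriv
  refine ⟨⟨(contDiff_const.mul h₁.1).add (contDiff_const.mul h₂.1), fun t => ?_⟩, hderiv⟩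
  rw [hderiv, (((h₁.hasDerivAt_deriv t).const_mul a).fun_add
    ((h₂.hasDerivAt_deriv t).const_mul b)).deriv]
  ring

end IsSolution

section PartialDeriv

variable {E F : Type*} [NormedAddCommGroup E] [NormedSpace ℝ E] [NormedAddCommGroup F]
  [NormedSpace ℝ F] {U : Set E} {G : E → F}

noncomputable def partialDeriv (v : E) (G : E → F) : E → F := fun p => fderiv ℝ G p v

lemma contDiffOn_partialDeriv (hU : IsOpen U) (hG : ContDiffOn ℝ (⊤ : ℕ∞) G U) (v : E) :
    ContDiffOn ℝ (⊤ : ℕ∞) (partialDeriv v G) U :=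
  (hG.fderiv_of_isOpen hU (by simp)).clm_apply contDiffOn_const

lemma contDiffOn_iterate_partialDeriv (hU : IsOpen U) (hG : ContDiffOn ℝ (⊤ : ℕ∞) G U)
    (v : E) (n : ℕ) : ContDiffOn ℝ (⊤ : ℕ∞) ((partialDeriv v)^[n] G) U := by
  induction n with
  | zero => exact hG
  | succ n ih =>
    rw [Function.iterate_succ_apply']
    exact contDiffOn_partialDeriv hU ih v

lemma partialDeriv_comm {p : E} (hG : ContDiffAt ℝ 2 G p) (v w : E) :
    partialDeriv w (partialDeriv v G) p = partialDeriv v (partialDeriv w G) p := by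
  have hd : DifferentiableAt ℝ (fderiv ℝ G) p :=
    (hG.fderiv_right (m := 1) (by norm_num)).differentiableAt (by norm_num)
  have hdiff : ∀ u, fderiv ℝ (fun q => fderiv ℝ G q u) p = (fderiv ℝ (fderiv ℝ G) p).flip u :=
    fun u => by simp [fderiv_clm_apply hd (differentiableAt_const u)]
  change fderiv ℝ (fun q => fderiv ℝ G q v) p w = fderiv ℝ (fun q => fderiv ℝ G q w) p v
  rw [hdiff, hdiff]
  exact hG.isSymmSndFDerivAt (by simp) w v

lemma partialDeriv_iterate_comm (hU : IsOpen U) (hG : ContDiffOn ℝ (⊤ : ℕ∞) G U) (v w : E)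
    (n : ℕ) {p : E} (hp : p ∈ U) :
    partialDeriv v ((partialDeriv w)^[n] G) p = (partialDeriv w)^[n] (partialDeriv v G) p := by
  induction n generalizing p with
  | zero => rfl
  | succ n ih =>
    have hC2 : ContDiffAt ℝ 2 ((partialDeriv w)^[n] G) p :=
      ((contDiffOn_iterate_partialDeriv hU hG w n).contDiffAt (hU.mem_nhds hp)).of_le
        (WithTop.coe_le_coe.2 le_top)
    have hev : partialDeriv v ((partialDeriv w)^[n] G) =ᶠ[nhds p]
        (partialDeriv w)^[n] (partialDeriv v G) :=
      Filter.eventually_of_mem (hU.mem_nhds hp) fun q hq => ih hq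
    rw [Function.iterate_succ_apply', Function.iterate_succ_apply', partialDeriv_comm hC2,
      partialDeriv, partialDeriv, hev.fderiv_eq]

end PartialDeriv

local notation "∂₁" => partialDeriv ((1 : ℝ), (0 : ℝ))
local notation "∂₂" => partialDeriv ((0 : ℝ), (1 : ℝ))

section Plane

variable {F : Type*} [NormedAddCommGroup F] [NormedSpace ℝ F] {U : Set (ℝ × ℝ)} {G : ℝ × ℝ → F}

lemma hasDerivAt_partialDeriv_fst {p : ℝ × ℝ} (hG : DifferentiableAt ℝ G p) :
    HasDerivAt (fun s => G (s, p.2)) (∂₁ G p) p.1 :=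
  hG.hasFDerivAt.comp_hasDerivAt p.1 ((hasDerivAt_id p.1).prodMk (hasDerivAt_const p.1 p.2))

lemma hasDerivAt_partialDeriv_snd {p : ℝ × ℝ} (hG : DifferentiableAt ℝ G p) :
    HasDerivAt (fun t => G (p.1, t)) (∂₂ G p) p.2 :=
  hG.hasFDerivAt.comp_hasDerivAt p.2 ((hasDerivAt_const p.2 p.1).prodMk (hasDerivAt_id p.2))

lemma hasDerivAt_diag {x : ℝ} (hG : DifferentiableAt ℝ G (x, x)) :
    HasDerivAt (fun y => G (y, y)) (∂₁ G (x, x) + ∂₂ G (x, x)) x := by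
  have h := hG.hasFDerivAt.comp_hasDerivAt (f := fun y => (y, y)) x
    ((hasDerivAt_id x).prodMk (hasDerivAt_id x))
  rw [show ((1 : ℝ), (1 : ℝ)) = (1, 0) + (0, 1) by simp, map_add] at h
  exact h

lemma iterate_partialDeriv_snd_eq_iteratedDeriv (hU : IsOpen U)
    (hG : ContDiffOn ℝ (⊤ : ℕ∞) G U) (n : ℕ) {p : ℝ × ℝ} (hp : p ∈ U) :
    ∂₂^[n] G p = iteratedDeriv n (fun t => G (p.1, t)) p.2 := by
  induction n generalizing p with
  | zero => rfl
  | succ n ih =>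
    have hslice : ∀ᶠ t in nhds p.2, (p.1, t) ∈ U :=
      (Continuous.prodMk_right p.1).continuousAt.preimage_mem_nhds (hU.mem_nhds hp)
    have hev : (fun t => ∂₂^[n] G (p.1, t)) =ᶠ[nhds p.2]
        iteratedDeriv n (fun t => G (p.1, t)) := by
      filter_upwards [hslice] with t ht using ih ht
    have hd : DifferentiableAt ℝ (∂₂^[n] G) p :=
      ((contDiffOn_iterate_partialDeriv hU hG _ n).contDiffAt (hU.mem_nhds hp)).differentiableAt
        (by simp)
    rw [Function.iterate_succ_apply', iteratedDeriv_succ, ← hev.deriv_eq]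
    exact (hasDerivAt_partialDeriv_snd hd).deriv.symm

lemma contDiff_iterate_partialDeriv_snd_diag (hU : IsOpen U) (hG : ContDiffOn ℝ (⊤ : ℕ∞) G U)
    (hdiag : ∀ x, (x, x) ∈ U) (n : ℕ) :
    ContDiff ℝ (⊤ : ℕ∞) (fun x => ∂₂^[n] G (x, x)) :=
  contDiff_iff_contDiffAt.2 fun x =>
    ((contDiffOn_iterate_partialDeriv hU hG _ n).contDiffAt (hU.mem_nhds (hdiag x))).comp
      (f := fun y => (y, y)) x (contDiffAt_id.prodMk contDiffAt_id)

end Plane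

lemma iteratedDeriv_sq_of_eq_zero {𝕜 𝔸 : Type*} [NontriviallyNormedField 𝕜] [NormedRing 𝔸]
    [NormedAlgebra 𝕜 𝔸] {g : 𝕜 → 𝔸} {n : ℕ} {x : 𝕜} (hg : ContDiffAt 𝕜 n g x) (hg₀ : g x = 0) :
    iteratedDeriv n (fun t => g t ^ 2) x =
      ∑ k ∈ Finset.Ico 1 n, (n.choose k : 𝔸) * iteratedDeriv k g x * iteratedDeriv (n - k) g x := by
  simp_rw [sq]
  rw [iteratedDeriv_fun_mul hg hg]
  cases n with
  | zero => simp [hg₀]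
  | succ m =>
    rw [Finset.range_eq_Ico, Finset.sum_eq_sum_Ico_succ_bot (by omega),
      Finset.sum_Ico_succ_top (by omega)]
    simp [hg₀]

theorem iterate_partialDeriv_snd_diag_succ {θ : ℝ → ℝ} {K : ℝ × ℝ → ℝ} {U : Set (ℝ × ℝ)}
    (hU : IsOpen U) (hK : ContDiffOn ℝ (⊤ : ℕ∞) K U) (hdiag : ∀ x, (x, x) ∈ U)
    (hK₀ : ∀ x, K (x, x) = 0) (hric : ∀ p ∈ U, ∂₁ K p = -1 - θ p.1 * K p ^ 2)
    {n : ℕ} (hn : 1 ≤ n) (x : ℝ) :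
    ∂₂^[n + 1] K (x, x) = deriv (fun y => ∂₂^[n] K (y, y)) x +
      θ x * ∑ k ∈ Finset.Ico 1 n, (n.choose k : ℝ) * ∂₂^[k] K (x, x) * ∂₂^[n - k] K (x, x) := by
  have hslice : ∀ k, iteratedDeriv k (fun t => K (x, t)) x = ∂₂^[k] K (x, x) := fun k =>
    (iterate_partialDeriv_snd_eq_iteratedDeriv hU hK k (hdiag x)).symm
  have hsliceC : ContDiffAt ℝ n (fun t => K (x, t)) x :=
    ((hK.contDiffAt (hU.mem_nhds (hdiag x))).comp (f := fun t => (x, t)) x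
      (contDiffAt_const.prodMk contDiffAt_id)).of_le (WithTop.coe_le_coe.2 le_top)
  have hric_slice : (fun t => ∂₁ K (x, t)) =ᶠ[nhds x] fun t => -1 - θ x * K (x, t) ^ 2 :=
    Filter.eventually_of_mem
      ((Continuous.prodMk_right x).continuousAt.preimage_mem_nhds (hU.mem_nhds (hdiag x)))
      fun t ht => hric _ ht
  have hmixed : ∂₁ (∂₂^[n] K) (x, x) =
      -(θ x * ∑ k ∈ Finset.Ico 1 n, (n.choose k : ℝ) * ∂₂^[k] K (x, x) * ∂₂^[n - k] K (x, x)) := by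
    rw [partialDeriv_iterate_comm hU hK _ _ n (hdiag x),
      iterate_partialDeriv_snd_eq_iteratedDeriv hU (contDiffOn_partialDeriv hU hK _) n (hdiag x),
      hric_slice.iteratedDeriv_eq, iteratedDeriv_const_sub hn, iteratedDeriv_neg,
      iteratedDeriv_const_mul _ (hsliceC.pow 2),
      iteratedDeriv_sq_of_eq_zero hsliceC (hK₀ x)]
    simp only [hslice]
  have hd : DifferentiableAt ℝ (∂₂^[n] K) (x, x) :=
    ((contDiffOn_iterate_partialDeriv hU hK _ n).contDiffAt
      (hU.mem_nhds (hdiag x))).differentiableAt (by simp)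
  rw [(hasDerivAt_diag hd).deriv, hmixed, Function.iterate_succ_apply']
  ring

section FundamentalKernel

variable {θ f₁ f₂ : ℝ → ℝ}

/-- For a basis `f₁, f₂` of solutions with Wronskian `1`, `fundSol₁ f₁ f₂ (x, ·)` and
`fundSol₂ f₁ f₂ (x, ·)` are the fundamental solutions `f_{x,1}, f_{x,2}` at `x`
(`isFundPair_fundSol`), so `fundQuot f₁ f₂ (x, t) = h_x(t)`. -/
noncomputable def fundSol₁ (f₁ f₂ : ℝ → ℝ) (p : ℝ × ℝ) : ℝ :=
  deriv f₂ p.1 * f₁ p.2 - deriv f₁ p.1 * f₂ p.2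

noncomputable def fundSol₂ (f₁ f₂ : ℝ → ℝ) (p : ℝ × ℝ) : ℝ := f₁ p.1 * f₂ p.2 - f₂ p.1 * f₁ p.2

noncomputable def fundQuot (f₁ f₂ : ℝ → ℝ) (p : ℝ × ℝ) : ℝ := fundSol₂ f₁ f₂ p / fundSol₁ f₁ f₂ p

lemma isFundPair_fundSol (h₁ : IsSolution θ f₁) (h₂ : IsSolution θ f₂)
    (hW : ∀ t, f₁ t * deriv f₂ t - deriv f₁ t * f₂ t = 1) (x : ℝ) :
    IsFundPair θ x (fun t => fundSol₁ f₁ f₂ (x, t)) (fun t => fundSol₂ f₁ f₂ (x, t)) := by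
  obtain ⟨hx₁, hderiv₁⟩ := h₁.linearCombination h₂ (deriv f₂ x) (-deriv f₁ x)
  obtain ⟨hx₂, hderiv₂⟩ := h₁.linearCombination h₂ (-f₂ x) (f₁ x)
  have e₁ : (fun t => fundSol₁ f₁ f₂ (x, t)) = fun t => deriv f₂ x * f₁ t + -deriv f₁ x * f₂ t :=
    funext fun t => by simp only [fundSol₁]; ring
  have e₂ : (fun t => fundSol₂ f₁ f₂ (x, t)) = fun t => -f₂ x * f₁ t + f₁ x * f₂ t :=
    funext fun t => by simp only [fundSol₂]; ring
  rw [e₁, e₂]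
  refine ⟨hx₁, hx₂, ?_, ?_, ?_, ?_⟩
  · linear_combination hW x
  · rw [hderiv₁]; ring
  · ring
  · rw [hderiv₂]; linear_combination hW x

lemma contDiff_fundSol₁ (h₁ : IsSolution θ f₁) (h₂ : IsSolution θ f₂) :
    ContDiff ℝ (⊤ : ℕ∞) (fundSol₁ f₁ f₂) :=
  ((h₂.contDiff_deriv.comp contDiff_fst).mul (h₁.1.comp contDiff_snd)).sub
    ((h₁.contDiff_deriv.comp contDiff_fst).mul (h₂.1.comp contDiff_snd))

lemma contDiff_fundSol₂ (h₁ : IsSolution θ f₁) (h₂ : IsSolution θ f₂) :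
    ContDiff ℝ (⊤ : ℕ∞) (fundSol₂ f₁ f₂) :=
  ((h₁.1.comp contDiff_fst).mul (h₂.1.comp contDiff_snd)).sub
    ((h₂.1.comp contDiff_fst).mul (h₁.1.comp contDiff_snd))

lemma fundQuot_diag (f₁ f₂ : ℝ → ℝ) (x : ℝ) : fundQuot f₁ f₂ (x, x) = 0 := by
  simp [fundQuot, fundSol₂, mul_comm]

/-- Moving the base point: `∂ₓ f_{x,2} = -f_{x,1}` and `∂ₓ f_{x,1} = θ(x) f_{x,2}`. -/
lemma partialDeriv_fst_fundQuot (h₁ : IsSolution θ f₁) (h₂ : IsSolution θ f₂) {p : ℝ × ℝ}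
    (hp : fundSol₁ f₁ f₂ p ≠ 0) :
    ∂₁ (fundQuot f₁ f₂) p = -1 - θ p.1 * fundQuot f₁ f₂ p ^ 2 := by
  have hd : DifferentiableAt ℝ (fundQuot f₁ f₂) p :=
    ((contDiff_fundSol₂ h₁ h₂).contDiffAt.div (contDiff_fundSol₁ h₁ h₂).contDiffAt
      hp).differentiableAt (by simp)
  have hnum : HasDerivAt (fun s => fundSol₂ f₁ f₂ (s, p.2)) (-fundSol₁ f₁ f₂ p) p.1 :=
    (((h₁.hasDerivAt p.1).mul_const (f₂ p.2)).fun_sub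
      ((h₂.hasDerivAt p.1).mul_const (f₁ p.2))).congr_deriv (by unfold fundSol₁; ring)
  have hden : HasDerivAt (fun s => fundSol₁ f₁ f₂ (s, p.2)) (θ p.1 * fundSol₂ f₁ f₂ p) p.1 :=
    (((h₂.hasDerivAt_deriv p.1).mul_const (f₁ p.2)).fun_sub
      ((h₁.hasDerivAt_deriv p.1).mul_const (f₂ p.2))).congr_deriv (by unfold fundSol₂; ring)
  rw [(hasDerivAt_partialDeriv_fst hd).unique (hnum.div hden hp), fundQuot]
  field_simp

end FundamentalKernel

/-- If `S n x = 𝒮_n^θ(x)` for all `n, x`, then each `S n` is smooth on ℝ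
and the recursion `𝒮_{n+1} = (𝒮_n)' + θ·Σ_{k=1}^{n-1} C(n,k)·𝒮_k·𝒮_{n-k}` holds. -/
theorem stmt10 (θ : ℝ → ℝ) (hθ : ContDiff ℝ (⊤ : ℕ∞) θ)
    (S : ℕ → ℝ → ℝ)
    (hS : ∀ (n : ℕ) (x : ℝ) (f₁ f₂ : ℝ → ℝ), IsFundPair θ x f₁ f₂ →
      S n x = iteratedDeriv n (fun t => f₂ t / f₁ t) x) :
    (∀ n : ℕ, 1 ≤ n → ContDiff ℝ (⊤ : ℕ∞) (S n)) ∧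
    (∀ n : ℕ, 1 ≤ n → ∀ x : ℝ,
      S (n + 1) x = deriv (S n) x +
        θ x * ∑ k ∈ Finset.Ico 1 n, (n.choose k : ℝ) * S k x * S (n - k) x) := by
  obtain ⟨f₁, f₂, h₁, h₂, h₁₀, h₁₀', h₂₀, h₂₀'⟩ := exists_isFundPair_zero hθ
  have hW : ∀ t, f₁ t * deriv f₂ t - deriv f₁ t * f₂ t = 1 := fun t => by
    rw [h₁.wronskian_eq_s10 h₂ t 0, h₁₀, h₁₀', h₂₀, h₂₀']; ring
  set U := {p : ℝ × ℝ | fundSol₁ f₁ f₂ p ≠ 0}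
  have hU : IsOpen U := isOpen_ne_fun (contDiff_fundSol₁ h₁ h₂).continuous continuous_const
  have hK : ContDiffOn ℝ (⊤ : ℕ∞) (fundQuot f₁ f₂) U :=
    (contDiff_fundSol₂ h₁ h₂).contDiffOn.div (contDiff_fundSol₁ h₁ h₂).contDiffOn fun _ hp => hp
  have hdiag : ∀ x, (x, x) ∈ U := fun x =>
    ne_of_eq_of_ne (by unfold fundSol₁; linear_combination hW x) one_ne_zero
  obtain rfl : S = fun n x => ∂₂^[n] (fundQuot f₁ f₂) (x, x) := funext₂ fun n x => by
    rw [hS n x _ _ (isFundPair_fundSol h₁ h₂ hW x),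
      iterate_partialDeriv_snd_eq_iteratedDeriv hU hK n (hdiag x)]
    rfl
  exact ⟨fun n _ => contDiff_iterate_partialDeriv_snd_diag hU hK hdiag n,
    fun n hn x => iterate_partialDeriv_snd_diag_succ hU hK hdiag (fundQuot_diag f₁ f₂)
      (fun _ hp => partialDeriv_fst_fundQuot h₁ h₂ hp) hn x⟩
end

section
/- Let θ : ℝ → ℝ be smooth and let R ∈ (0,∞). Then for every integer n ≥ 1 and every x ∈ ℝ, 𝒮_n^{θ,g_R}(x) = Σ_{k=1}^n s(n,k)·(π/R)^{n−k}·𝒮_k^θ(x), where s(n,k) denotes the coefficient of u^k in the polynomial ∏_{s=0}^{n−1}(u + s) (the unsigned Stirling number of the first kind). -/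
noncomputable section

open MeasureTheory Filter

section

open Finset Polynomial Nat
open scoped ContDiff

theorem coeff_prod_range_X_add_natCast {R : Type*} [CommSemiring R] (n k : ℕ) :
    (∏ s ∈ range n, (X + C (s : R))).coeff k = (stirlingFirst n k : R) := by
  induction n generalizing k with
  | zero => cases k <;> simp [coeff_one]
  | succ n ih =>
    rw [prod_range_succ, mul_add, coeff_add, coeff_mul_C]
    cases k with
    | zero =>
      rw [coeff_mul_X_zero, ih]
      cases n <;> simp
    | succ k =>
      rw [coeff_mul_X, ih, ih, stirlingFirst_succ_succ]
      push_cast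
      ring

theorem sum_stirlingFirst_succ {R : Type*} [CommSemiring R] (a : R) (D : ℕ → R) (m : ℕ) :
    ∑ k ∈ range (m + 2), (stirlingFirst (m + 1) k : R) * a ^ (m + 1 - k) * D k =
      m * a * ∑ k ∈ range (m + 1), (stirlingFirst m k : R) * a ^ (m - k) * D k +
        ∑ k ∈ range (m + 1), (stirlingFirst m k : R) * a ^ (m - k) * D (k + 1) := by
  have hlow : ∑ k ∈ range (m + 1), (m * stirlingFirst m (k + 1) : R) * a ^ (m - k) * D (k + 1) =
      m * a * ∑ k ∈ range (m + 1), (stirlingFirst m k : R) * a ^ (m - k) * D k := by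
    have hm0 : (m * stirlingFirst m 0 : R) = 0 := by cases m <;> simp
    have h0 : (m : R) * a * (stirlingFirst m 0 * a ^ (m - 0) * D 0) = 0 := by
      calc _ = (m * stirlingFirst m 0 : R) * (a * a ^ (m - 0) * D 0) := by ring
        _ = 0 := by rw [hm0, zero_mul]
    rw [sum_range_succ, stirlingFirst_eq_zero_of_lt (by omega), sum_range_succ', mul_add, h0,
      mul_sum]
    simp only [cast_zero, mul_zero, zero_mul, add_zero]
    refine sum_congr rfl fun k hk => ?_
    rw [show m - k = m - (k + 1) + 1 by grind]
    ring
  rw [sum_range_succ', stirlingFirst_succ_zero]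
  simp only [stirlingFirst_succ_succ, Nat.add_sub_add_right, cast_add, cast_mul, add_mul,
    sum_add_distrib, cast_zero, zero_mul, add_zero, hlow]

theorem ContDiffAt.hasDerivAt_iteratedDeriv {𝕜 F : Type*} [NontriviallyNormedField 𝕜]
    [NormedAddCommGroup F] [NormedSpace 𝕜 F] {f : 𝕜 → F} {n : WithTop ℕ∞} {x : 𝕜}
    (hf : ContDiffAt 𝕜 n f x) {k : ℕ} (hk : k < n) :
    HasDerivAt (iteratedDeriv k f) (iteratedDeriv (k + 1) f x) x := by
  have hd : DifferentiableAt 𝕜 (iteratedDeriv k f) x := by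
    rw [iteratedDeriv_eq_equiv_comp]
    exact (ContinuousMultilinearMap.piFieldEquiv 𝕜 (Fin k) F).symm.differentiableAt.comp x
      (hf.differentiableAt_iteratedFDeriv hk)
  rw [iteratedDeriv_succ]
  exact hd.hasDerivAt

theorem iteratedDeriv_comp_eq_pow_mul_sum_stirlingFirst {𝕜 : Type*} [NontriviallyNormedField 𝕜]
    {a : 𝕜} {h g w : 𝕜 → 𝕜} {U : Set 𝕜} (hU : IsOpen U)
    (hh : ∀ t ∈ U, ContDiffAt 𝕜 ∞ h (g t)) (hg : ∀ t ∈ U, HasDerivAt g (w t) t)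
    (hw : ∀ t ∈ U, HasDerivAt w (a * w t ^ 2) t) (m : ℕ) :
    ∀ t ∈ U, iteratedDeriv m (h ∘ g) t =
      w t ^ m * ∑ k ∈ range (m + 1), (stirlingFirst m k : 𝕜) * a ^ (m - k) *
        iteratedDeriv k h (g t) := by
  induction m with
  | zero => simp
  | succ m ih =>
    intro t ht
    have hD (k : ℕ) : HasDerivAt (fun s => iteratedDeriv k h (g s))
        (iteratedDeriv (k + 1) h (g t) * w t) t :=
      ((hh t ht).hasDerivAt_iteratedDeriv (by exact_mod_cast WithTop.coe_lt_top _)).comp t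
        (hg t ht)
    have hW : HasDerivAt (fun s => w s ^ m) (m * a * w t ^ (m + 1)) t := by
      refine ((hw t ht).fun_pow m).congr_deriv ?_
      rcases m with _ | m
      · simp
      · push_cast
        ring
    have hev : iteratedDeriv m (h ∘ g) =ᶠ[nhds t] fun s => w s ^ m *
        ∑ k ∈ range (m + 1), (stirlingFirst m k : 𝕜) * a ^ (m - k) * iteratedDeriv k h (g s) :=
      (hU.eventually_mem ht).mono ih
    rw [iteratedDeriv_succ, hev.deriv_eq,
      (hW.fun_mul (HasDerivAt.fun_sum fun k _ => (hD k).const_mul _)).deriv, sum_stirlingFirst_succ]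
    simp only [← mul_assoc, ← sum_mul]
    ring

theorem hasDerivAt_inv_one_sub_mul {𝕜 : Type*} [NontriviallyNormedField 𝕜] {a t : 𝕜}
    (ht : 1 - a * t ≠ 0) :
    HasDerivAt (fun s => (1 - a * s)⁻¹) (a * (1 - a * t)⁻¹ ^ 2) t :=
  (((hasDerivAt_id' t).const_mul a).const_sub 1).fun_inv ht |>.congr_deriv (by field_simp)

theorem hasDerivAt_gR {R t : ℝ} (hR : R ≠ 0) (ht : 1 - Real.pi / R * t ≠ 0) :
    HasDerivAt (gR R) (1 - Real.pi / R * t)⁻¹ t :=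
  ((((hasDerivAt_id' t).const_mul _).const_sub 1).log ht).const_mul (-(R / Real.pi))
    |>.congr_deriv (by field_simp)

end

theorem stmt11_general (θ : ℝ → ℝ) (R : ℝ) (hR : 0 < R) :
    ∀ n : ℕ, 1 ≤ n → ∀ (x : ℝ) (f₁ f₂ : ℝ → ℝ), IsFundPair θ x f₁ f₂ →
      SchR R x f₁ f₂ n =
        ∑ k ∈ Finset.Icc 1 n,
          (∏ s ∈ Finset.range n, (Polynomial.X + Polynomial.C (s : ℝ))).coeff k *
            (Real.pi / R) ^ (n - k) * iteratedDeriv k (fun t => f₂ t / f₁ t) x := by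
  intro n hn x f₁ f₂ hfp
  obtain ⟨⟨hf₁, -⟩, ⟨hf₂, -⟩, hf₁x, -, -, -⟩ := hfp
  set a := Real.pi / R
  set W : Set ℝ := {t | 1 - a * t ≠ 0}
  have hg : ∀ t ∈ W, HasDerivAt (fun t => x + gR R t) (1 - a * t)⁻¹ t :=
    fun t ht => (hasDerivAt_gR hR.ne' ht).const_add x
  set U : Set ℝ := W ∩ (fun t => x + gR R t) ⁻¹' {y | f₁ y ≠ 0}
  have hU : IsOpen U :=
    ContinuousOn.isOpen_inter_preimage (fun t ht => (hg t ht).continuousAt.continuousWithinAt)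
      (isOpen_ne.preimage (by fun_prop)) (isOpen_ne.preimage hf₁.continuous)
  have h0 : (0 : ℝ) ∈ U := by simp [U, W, gR, hf₁x]
  have key := iteratedDeriv_comp_eq_pow_mul_sum_stirlingFirst (h := fun t => f₂ t / f₁ t) hU
    (fun t ht => hf₂.contDiffAt.div hf₁.contDiffAt ht.2) (fun t ht => hg t ht.1)
    (fun t ht => hasDerivAt_inv_one_sub_mul ht.1) n 0 h0
  have gR_zero : gR R 0 = 0 := by simp [gR]
  calc SchR R x f₁ f₂ n = ∑ k ∈ Finset.range (n + 1), (Nat.stirlingFirst n k : ℝ) * a ^ (n - k) *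
        iteratedDeriv k (fun t => f₂ t / f₁ t) x := key.trans (by simp [gR_zero])
    _ = _ := by
      obtain ⟨m, rfl⟩ := Nat.exists_eq_add_of_le' hn
      rw [Finset.range_eq_Ico, Finset.sum_eq_sum_Ico_succ_bot (by omega),
        Nat.stirlingFirst_succ_zero, Nat.cast_zero, zero_mul, zero_mul, zero_add,
        Finset.Ico_add_one_right_eq_Icc]
      simp_rw [coeff_prod_range_X_add_natCast]

/-- `𝒮_n^{θ,g_R}(x) = Σ_{k=1}^n s(n,k)·(π/R)^{n-k}·𝒮_k^θ(x)`, where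
`s(n,k)` is the coefficient of `u^k` in `∏_{s=0}^{n-1}(u+s)` (unsigned Stirling number
of the first kind). -/
theorem stmt11 (θ : ℝ → ℝ) (hθ : ContDiff ℝ (⊤ : ℕ∞) θ) (R : ℝ) (hR : 0 < R) :
    ∀ n : ℕ, 1 ≤ n → ∀ (x : ℝ) (f₁ f₂ : ℝ → ℝ), IsFundPair θ x f₁ f₂ →
      SchR R x f₁ f₂ n =
        ∑ k ∈ Finset.Icc 1 n,
          (∏ s ∈ Finset.range n, (Polynomial.X + Polynomial.C (s : ℝ))).coeff k *
            (Real.pi / R) ^ (n - k) * iteratedDeriv k (fun t => f₂ t / f₁ t) x :=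
  stmt11_general θ R hR

end
end

section
/- Let f, g : ℝ → ℝ be smooth, let a, b, c, d ∈ ℝ, let t ∈ ℝ and let n ≥ 1 be an integer. Then det of the 2n×2n matrix obtained by stacking the n×2n block T(a·f + b·g, n)(t) on top of the n×2n block T(c·f + d·g, n)(t) equals (a·d − b·c)ⁿ times det of the 2n×2n matrix obtained by stacking T(f, n)(t) on top of T(g, n)(t). -/
/-!
Each row block of the left-hand matrix is a linear combination of the row blocks `T(f,n)(t)`
and `T(g,n)(t)`, because taking derivatives is linear. Indexing the rows by `Fin 2 × Fin n`,
the left-hand matrix is therefore `(Q ⊗ₖ 1) * M` with `Q = !![a, b; c, d]` and `M` the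
right-hand matrix, and `det (Q ⊗ₖ 1) = (det Q) ^ n`.
-/

open Matrix Kronecker

lemma iteratedDeriv_const_mul_add_const_mul {𝕜 : Type*} [NontriviallyNormedField 𝕜]
    {f g : 𝕜 → 𝕜} {m : ℕ} {x : 𝕜} (hf : ContDiffAt 𝕜 m f x) (hg : ContDiffAt 𝕜 m g x)
    (a b : 𝕜) :
    iteratedDeriv m (fun s => a * f s + b * g s) x
      = a * iteratedDeriv m f x + b * iteratedDeriv m g x := by
  have h := iteratedDeriv_add (hf.const_smul a) (hg.const_smul b)
  rw [iteratedDeriv_fun_const_smul_field, iteratedDeriv_fun_const_smul_field] at h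
  simpa only [Pi.add_def, Pi.smul_apply, smul_eq_mul] using h

lemma Tentry_const_mul_add_const_mul {f g : ℝ → ℝ} {t : ℝ}
    (hf : ContDiffAt ℝ (⊤ : ℕ∞) f t) (hg : ContDiffAt ℝ (⊤ : ℕ∞) g t) (a b : ℝ) (i j : ℕ) :
    Tentry (fun s => a * f s + b * g s) t i j = a * Tentry f t i j + b * Tentry g t i j := by
  unfold Tentry
  split_ifs
  · rw [iteratedDeriv_const_mul_add_const_mul (hf.of_le (WithTop.coe_le_coe.mpr le_top))
      (hg.of_le (WithTop.coe_le_coe.mpr le_top))]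
    ring
  · ring

namespace Matrix

variable {ι m o R : Type*} [Fintype ι] [Fintype m] [DecidableEq m]

lemma kronecker_one_mul_apply [Semiring R] (Q : Matrix ι ι R) (N : Matrix (ι × m) o R)
    (k : ι) (i : m) (j : o) :
    (Q ⊗ₖ (1 : Matrix m m R) * N) (k, i) j = ∑ l, Q k l * N (l, i) j := by
  simp only [mul_apply, Fintype.sum_prod_type, kroneckerMap_apply, one_apply, mul_ite, mul_one,
    mul_zero, ite_mul, zero_mul, Finset.sum_ite_eq, Finset.mem_univ, if_true]

lemma det_of_sum_mul_blockRows [DecidableEq ι] [CommRing R] (Q : Matrix ι ι R)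
    (N : Matrix (ι × m) (ι × m) R) :
    (of fun p j => ∑ l, Q p.1 l * N (l, p.2) j).det = Q.det ^ Fintype.card m * N.det := by
  have hprod : of (fun p j => ∑ l, Q p.1 l * N (l, p.2) j) = Q ⊗ₖ (1 : Matrix m m R) * N := by
    ext ⟨k, i⟩ j
    rw [kronecker_one_mul_apply, of_apply]
  rw [hprod, det_mul, det_kronecker, det_one, one_pow, mul_one]

end Matrix

noncomputable def stackedT (f g : ℝ → ℝ) (t : ℝ) (n : ℕ) : Matrix (Fin (2 * n)) (Fin (2 * n)) ℝ :=
  of fun i j => if (i : ℕ) < n then Tentry f t i j else Tentry g t (i - n) j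

lemma stackedT_finProdFinEquiv (f g : ℝ → ℝ) (t : ℝ) {n : ℕ} (k : Fin 2) (i : Fin n)
    (j : Fin (2 * n)) :
    stackedT f g t n (finProdFinEquiv (k, i)) j = Tentry (![f, g] k) t i j := by
  fin_cases k <;> simp [stackedT, finProdFinEquiv]

theorem stmt13_general (f g : ℝ → ℝ) (hf : ContDiff ℝ (⊤ : ℕ∞) f) (hg : ContDiff ℝ (⊤ : ℕ∞) g)
    (a b c d t : ℝ) (n : ℕ) :
    (Matrix.of fun i j : Fin (2 * n) =>
      if (i : ℕ) < n then Tentry (fun s => a * f s + b * g s) t (i : ℕ) (j : ℕ)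
      else Tentry (fun s => c * f s + d * g s) t ((i : ℕ) - n) (j : ℕ)).det =
    (a * d - b * c) ^ n *
      (Matrix.of fun i j : Fin (2 * n) =>
        if (i : ℕ) < n then Tentry f t (i : ℕ) (j : ℕ)
        else Tentry g t ((i : ℕ) - n) (j : ℕ)).det := by
  change (stackedT _ _ t n).det = _ * (stackedT f g t n).det
  let e : Fin 2 × Fin n ≃ Fin (2 * n) := finProdFinEquiv
  have hrows :
      (stackedT (fun s => a * f s + b * g s) (fun s => c * f s + d * g s) t n).submatrix e e =
        of fun p j => ∑ l, !![a, b; c, d] p.1 l * (stackedT f g t n).submatrix e e (l, p.2) j := by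
    ext ⟨k, i⟩ j
    fin_cases k <;>
      simp [e, stackedT_finProdFinEquiv, Fin.sum_univ_two,
        Tentry_const_mul_add_const_mul hf.contDiffAt hg.contDiffAt]
  rw [← det_submatrix_equiv_self e, hrows, det_of_sum_mul_blockRows, det_submatrix_equiv_self,
    det_fin_two_of, Fintype.card_fin]

/-- The determinant of the `2n×2n` matrix stacking `T(af+bg, n)(t)` on
top of `T(cf+dg, n)(t)` equals `(ad - bc)ⁿ` times the determinant of the matrix
stacking `T(f, n)(t)` on top of `T(g, n)(t)`. -/
theorem stmt13 (f g : ℝ → ℝ) (hf : ContDiff ℝ (⊤ : ℕ∞) f) (hg : ContDiff ℝ (⊤ : ℕ∞) g)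
    (a b c d t : ℝ) (n : ℕ) (hn : 1 ≤ n) :
    (Matrix.of fun i j : Fin (2 * n) =>
      if (i : ℕ) < n then Tentry (fun s => a * f s + b * g s) t (i : ℕ) (j : ℕ)
      else Tentry (fun s => c * f s + d * g s) t ((i : ℕ) - n) (j : ℕ)).det =
    (a * d - b * c) ^ n *
      (Matrix.of fun i j : Fin (2 * n) =>
        if (i : ℕ) < n then Tentry f t (i : ℕ) (j : ℕ)
        else Tentry g t ((i : ℕ) - n) (j : ℕ)).det :=
  stmt13_general f g hf hg a b c d t n
end

section
/- Let K ∈ ℝ and let θ : ℝ → ℝ be the constant function θ ≡ K. Then for every x ∈ ℝ and every integer n ≥ 1: 𝒮_{2n−1}^θ(x) = (4ⁿ·(4ⁿ − 1)/(2n))·|B_{2n}|·K^{n−1} and 𝒮_{2n}^θ(x) = 0, where B_{2n} denotes the 2n-th Bernoulli number. -/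
noncomputable section

open MeasureTheory Filter

open PowerSeries Topology
open scoped Nat ContDiff

section TanhSeries

/-- `coshSqrt`, `sinhSqrtDiv` and `tanhSqrtDiv` are `cosh √X`, `sinh √X / √X` and
`tanh √X / √X`. -/
def coshSqrt : ℚ⟦X⟧ := mk fun m => ((2 * m)! : ℚ)⁻¹

def sinhSqrtDiv : ℚ⟦X⟧ := mk fun m => ((2 * m + 1)! : ℚ)⁻¹

def tanhSqrtDiv : ℚ⟦X⟧ :=
  mk fun m => 4 ^ (m + 1) * (4 ^ (m + 1) - 1) * bernoulli (2 * m + 2) / (2 * m + 2)!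

local notation "expand₂" => expand 2 two_ne_zero

lemma PowerSeries.expand_injective {R : Type*} [CommRing R] {p : ℕ} (hp : p ≠ 0) :
    Function.Injective (expand p hp : R⟦X⟧ →ₐ[R] R⟦X⟧) := fun f g h => by
  ext m
  rw [← coeff_expand_mul p hp f, h, coeff_expand_mul]

lemma coeff_exp_add_evalNegHom_exp (n : ℕ) :
    coeff n (exp ℚ + evalNegHom (exp ℚ)) = (1 + (-1) ^ n) / n ! := by
  rw [map_add, evalNegHom, coeff_rescale, coeff_exp]
  simp only [Algebra.algebraMap_self, RingHom.id_apply]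
  ring

lemma coeff_exp_sub_evalNegHom_exp (n : ℕ) :
    coeff n (exp ℚ - evalNegHom (exp ℚ)) = (1 - (-1) ^ n) / n ! := by
  rw [map_sub, evalNegHom, coeff_rescale, coeff_exp]
  simp only [Algebra.algebraMap_self, RingHom.id_apply]
  ring

lemma two_mul_expand_coshSqrt : 2 * expand₂ coshSqrt = exp ℚ + evalNegHom (exp ℚ) := by
  ext n
  rw [coeff_exp_add_evalNegHom_exp, show (2 : ℚ⟦X⟧) = C 2 from rfl, coeff_C_mul]
  obtain ⟨m, rfl | rfl⟩ := n.even_or_odd'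
  · simp only [coshSqrt, coeff_expand_mul, coeff_mk, pow_mul, even_two, Even.neg_pow, one_pow]
    ring
  · rw [coeff_expand_of_not_dvd _ _ _ (by omega), pow_succ, pow_mul]
    simp

lemma two_mul_X_mul_expand_sinhSqrtDiv :
    2 * (X * expand₂ sinhSqrtDiv) = exp ℚ - evalNegHom (exp ℚ) := by
  ext n
  rw [coeff_exp_sub_evalNegHom_exp, show (2 : ℚ⟦X⟧) = C 2 from rfl, coeff_C_mul]
  obtain ⟨m, rfl | rfl⟩ := n.even_or_odd'
  · rcases m with _ | m
    · simp
    rw [show 2 * (m + 1) = (2 * m + 1) + 1 by ring, coeff_succ_X_mul,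
      coeff_expand_of_not_dvd _ _ _ (by omega), pow_succ, pow_succ, pow_mul]
    simp
  · rw [coeff_succ_X_mul, coeff_expand_mul, pow_succ, pow_mul]
    simp only [sinhSqrtDiv, coeff_mk, even_two, Even.neg_pow, one_pow]
    ring

lemma X_sq_mul_expand_tanhSqrtDiv :
    X ^ 2 * expand₂ tanhSqrtDiv =
      rescale 4 (bernoulliPowerSeries ℚ) - rescale 2 (bernoulliPowerSeries ℚ) + X := by
  ext n
  simp only [coeff_X_pow_mul', map_add, map_sub, coeff_rescale, bernoulliPowerSeries, coeff_mk,
    coeff_X, Algebra.algebraMap_self, RingHom.id_apply]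
  obtain ⟨m, rfl | rfl⟩ := n.even_or_odd'
  · rcases m with _ | m
    · simp
    rw [if_pos (by omega), show 2 * (m + 1) - 2 = 2 * m by omega, coeff_expand_mul,
      if_neg (by omega), pow_mul, pow_mul, show (4 : ℚ) ^ 2 = 4 * 4 by norm_num,
      show (2 : ℚ) ^ 2 = 4 by norm_num, mul_pow, show 2 * (m + 1) = 2 * m + 2 by ring]
    simp only [tanhSqrtDiv, coeff_mk]
    ring
  · rcases m with _ | m
    · norm_num [bernoulli_one]
    rw [if_pos (by omega), coeff_expand_of_not_dvd _ _ _ (by omega),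
      bernoulli_eq_zero_of_odd ⟨m + 1, by ring⟩ (by omega)]
    simp

lemma rescale_bernoulliPowerSeries_mul_exp_pow_sub_one (k : ℕ) :
    rescale (k : ℚ) (bernoulliPowerSeries ℚ) * (exp ℚ ^ k - 1) = (k : ℚ⟦X⟧) * X := by
  have h := congrArg (rescale (k : ℚ)) (bernoulliPowerSeries_mul_exp_sub_one ℚ)
  rwa [map_mul, map_sub, map_one, rescale_X, ← exp_pow_eq_rescale_exp, map_natCast] at h

lemma exp_pow_sub_one_ne_zero {k : ℕ} (hk : k ≠ 0) : exp ℚ ^ k - 1 ≠ 0 := by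
  intro h
  apply hk
  simpa [exp_pow_eq_rescale_exp, coeff_rescale, coeff_exp] using congrArg (coeff 1) h

/-- The formal version of `X tanh X = X - 2X / (e^{2X} - 1) + 4X / (e^{4X} - 1)`. -/
lemma bernoulli_tanh_identity :
    (rescale 4 (bernoulliPowerSeries ℚ) - rescale 2 (bernoulliPowerSeries ℚ) + X) *
      (exp ℚ + evalNegHom (exp ℚ)) = X * (exp ℚ - evalNegHom (exp ℚ)) := by
  have h2 := rescale_bernoulliPowerSeries_mul_exp_pow_sub_one 2
  have h4 := rescale_bernoulliPowerSeries_mul_exp_pow_sub_one 4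
  have hU := exp_mul_exp_neg_eq_one (A := ℚ)
  push_cast at h2 h4
  set E := exp ℚ
  set U := evalNegHom E
  -- `(e^{4X} - 1) eˣ` clears the denominators, as `e^{4X} - 1 = (e^{2X} - 1)(e^{2X} + 1)`.
  apply mul_right_cancel₀ (mul_ne_zero (exp_pow_sub_one_ne_zero (k := 4) (by norm_num))
    (left_ne_zero_of_mul_eq_one hU))
  linear_combination (E * (E + U)) * h4 - (E * (E + U) * (E ^ 2 + 1)) * h2 +
    (X * ((E ^ 2 - 1) ^ 2 + E ^ 4 - 1)) * hU

theorem tanhSqrtDiv_mul_coshSqrt : tanhSqrtDiv * coshSqrt = sinhSqrtDiv := by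
  apply expand_injective two_ne_zero
  have h2 : (2 : ℚ⟦X⟧) ≠ 0 := by rw [show (2 : ℚ⟦X⟧) = C 2 from rfl]; simp
  apply mul_left_cancel₀ (mul_ne_zero (pow_ne_zero 2 X_ne_zero) h2)
  calc X ^ 2 * 2 * expand₂ (tanhSqrtDiv * coshSqrt)
      = (X ^ 2 * expand₂ tanhSqrtDiv) * (2 * expand₂ coshSqrt) := by rw [map_mul]; ring
    _ = X * (2 * (X * expand₂ sinhSqrtDiv)) := by
      rw [X_sq_mul_expand_tanhSqrtDiv, two_mul_expand_coshSqrt, bernoulli_tanh_identity,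
        two_mul_X_mul_expand_sinhSqrtDiv]
    _ = X ^ 2 * 2 * expand₂ sinhSqrtDiv := by ring

lemma abs_bernoulli_two_mul {n : ℕ} (hn : n ≠ 0) :
    |bernoulli (2 * n)| = (-1) ^ (n + 1) * bernoulli (2 * n) := by
  have hpos : (0 : ℝ) < 2 ^ (2 * n - 1) * Real.pi ^ (2 * n) / (2 * n)! := by positivity
  have hnonneg : (0 : ℝ) ≤ ((-1) ^ (n + 1) * bernoulli (2 * n) : ℚ) := by
    refine (mul_nonneg_iff_of_pos_right hpos).mp ?_
    convert (hasSum_zeta_nat hn).nonneg fun k => by positivity using 1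
    push_cast
    ring
  rw [← abs_of_nonneg (Rat.cast_nonneg.mp hnonneg), abs_mul, abs_pow, abs_neg, abs_one, one_pow,
    one_mul]

/-- `F (X) ↦ F (-K X²)`: it maps `cosh √X` to the Taylor series of `cos (√K t)` without
choosing a square root of `K`. -/
def compNegMulSq (K : ℝ) : ℚ⟦X⟧ →+* ℝ⟦X⟧ :=
  (expand₂).toRingHom.comp ((rescale (-K)).comp (map (algebraMap ℚ ℝ)))

lemma coeff_two_mul_compNegMulSq (K : ℝ) (F : ℚ⟦X⟧) (m : ℕ) :
    coeff (2 * m) (compNegMulSq K F) = (-K) ^ m * ((coeff m F : ℚ) : ℝ) := by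
  simp [compNegMulSq, coeff_rescale]

lemma coeff_two_mul_add_one_compNegMulSq (K : ℝ) (F : ℚ⟦X⟧) (m : ℕ) :
    coeff (2 * m + 1) (compNegMulSq K F) = 0 :=
  coeff_expand_of_not_dvd 2 two_ne_zero _ (by omega)

end TanhSeries

section FormalTaylorSeries

variable {𝕜 : Type*} [NontriviallyNormedField 𝕜]

def formalTaylorSeries (f : 𝕜 → 𝕜) (x : 𝕜) : 𝕜⟦X⟧ := mk fun n => iteratedDeriv n f x / n !

variable {f g : 𝕜 → 𝕜} {x : 𝕜}

lemma coeff_formalTaylorSeries (n : ℕ) :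
    coeff n (formalTaylorSeries f x) = iteratedDeriv n f x / n ! :=
  coeff_mk _ _

lemma Filter.EventuallyEq.formalTaylorSeries_eq (h : f =ᶠ[𝓝 x] g) :
    formalTaylorSeries f x = formalTaylorSeries g x := by
  ext n
  rw [coeff_formalTaylorSeries, coeff_formalTaylorSeries, h.iteratedDeriv_eq]

lemma formalTaylorSeries_mul [CharZero 𝕜] (hf : ContDiffAt 𝕜 ∞ f x) (hg : ContDiffAt 𝕜 ∞ g x) :
    formalTaylorSeries (f * g) x = formalTaylorSeries f x * formalTaylorSeries g x := by
  ext n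
  have hn : ((n : ℕ) : WithTop ℕ∞) ≤ ∞ := mod_cast le_top
  rw [coeff_formalTaylorSeries, iteratedDeriv_mul (hf.of_le hn) (hg.of_le hn), coeff_mul,
    Finset.Nat.sum_antidiagonal_eq_sum_range_succ_mk, Finset.sum_div]
  refine Finset.sum_congr rfl fun i hi => ?_
  have hin : i ≤ n := Nat.lt_succ_iff.mp (Finset.mem_range.mp hi)
  have : (n ! : 𝕜) ≠ 0 := Nat.cast_ne_zero.mpr n.factorial_ne_zero
  rw [coeff_formalTaylorSeries, coeff_formalTaylorSeries, Nat.cast_choose 𝕜 hin]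
  field_simp

end FormalTaylorSeries

section ConstantCoefficientODE

variable {𝕜 : Type*} [NontriviallyNormedField 𝕜] {f : 𝕜 → 𝕜} {K x : 𝕜}

lemma iteratedDeriv_add_two_of_deriv_deriv (hode : ∀ t, deriv (deriv f) t + K * f t = 0)
    (n : ℕ) : iteratedDeriv (n + 2) f x = -K * iteratedDeriv n f x := by
  have h : deriv (deriv f) = fun t => -K * f t :=
    funext fun t => by linear_combination hode t
  rw [iteratedDeriv_succ', iteratedDeriv_succ', h, iteratedDeriv_const_mul_field]

lemma iteratedDeriv_two_mul_of_deriv_deriv (hode : ∀ t, deriv (deriv f) t + K * f t = 0)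
    (m : ℕ) : iteratedDeriv (2 * m) f x = (-K) ^ m * f x ∧
      iteratedDeriv (2 * m + 1) f x = (-K) ^ m * deriv f x := by
  induction m with
  | zero => simp
  | succ m ih =>
    rw [show 2 * (m + 1) = 2 * m + 2 by ring, show 2 * m + 2 + 1 = (2 * m + 1) + 2 by ring,
      iteratedDeriv_add_two_of_deriv_deriv hode, iteratedDeriv_add_two_of_deriv_deriv hode,
      ih.1, ih.2, pow_succ]
    constructor <;> ring

end ConstantCoefficientODE

lemma formalTaylorSeries_of_deriv_deriv {f : ℝ → ℝ} {K x : ℝ}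
    (hode : ∀ t, deriv (deriv f) t + K * f t = 0) :
    formalTaylorSeries f x =
      C (f x) * compNegMulSq K coshSqrt + C (deriv f x) * (X * compNegMulSq K sinhSqrtDiv) := by
  ext n
  obtain ⟨m, rfl | rfl⟩ := n.even_or_odd'
  · have hsin : coeff (2 * m) (X * compNegMulSq K sinhSqrtDiv) = 0 := by
      rcases m with _ | m
      · simp
      · rw [show 2 * (m + 1) = 2 * m + 1 + 1 by ring, coeff_succ_X_mul,
          coeff_two_mul_add_one_compNegMulSq]
    simp only [map_add, coeff_C_mul, hsin, coeff_formalTaylorSeries, coeff_two_mul_compNegMulSq,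
      (iteratedDeriv_two_mul_of_deriv_deriv hode m).1, coshSqrt, coeff_mk]
    push_cast
    ring
  · simp only [map_add, coeff_C_mul, coeff_succ_X_mul, coeff_formalTaylorSeries,
      coeff_two_mul_compNegMulSq, coeff_two_mul_add_one_compNegMulSq,
      (iteratedDeriv_two_mul_of_deriv_deriv hode m).2, sinhSqrtDiv, coeff_mk]
    push_cast
    ring

lemma formalTaylorSeries_div_of_isFundPair {K x : ℝ} {f₁ f₂ : ℝ → ℝ}
    (hf : IsFundPair (fun _ => K) x f₁ f₂) :
    formalTaylorSeries (fun t => f₂ t / f₁ t) x = X * compNegMulSq K tanhSqrtDiv := by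
  obtain ⟨⟨hf₁, hode₁⟩, ⟨hf₂, hode₂⟩, h₁x, h₁'x, h₂x, h₂'x⟩ := hf
  have hf₁x : f₁ x ≠ 0 := by simp [h₁x]
  have hprod : f₂ =ᶠ[𝓝 x] (fun t => f₂ t / f₁ t) * f₁ := by
    filter_upwards [hf₁.continuous.continuousAt.eventually_ne hf₁x] with t ht
    simp [div_mul_cancel₀ _ ht]
  have hquot : ContDiffAt ℝ ∞ (fun t => f₂ t / f₁ t) x := hf₂.contDiffAt.div hf₁.contDiffAt hf₁x
  have hcos : compNegMulSq K coshSqrt ≠ 0 := fun h => by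
    have h0 := coeff_two_mul_compNegMulSq K coshSqrt 0
    rw [h, map_zero] at h0
    simp [coshSqrt] at h0
  apply mul_right_cancel₀ hcos
  calc formalTaylorSeries (fun t => f₂ t / f₁ t) x * compNegMulSq K coshSqrt
      = formalTaylorSeries (fun t => f₂ t / f₁ t) x * formalTaylorSeries f₁ x := by
        simp [formalTaylorSeries_of_deriv_deriv hode₁, h₁x, h₁'x]
    _ = formalTaylorSeries f₂ x := by
        rw [← formalTaylorSeries_mul hquot hf₁.contDiffAt, hprod.formalTaylorSeries_eq]
    _ = X * compNegMulSq K sinhSqrtDiv := by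
        simp [formalTaylorSeries_of_deriv_deriv hode₂, h₂x, h₂'x]
    _ = X * compNegMulSq K tanhSqrtDiv * compNegMulSq K coshSqrt := by
        rw [mul_assoc, ← map_mul, tanhSqrtDiv_mul_coshSqrt]

/-- For the constant function `θ ≡ K`, for every `x` and `n ≥ 1`:
`𝒮_{2n-1}^θ(x) = (4ⁿ(4ⁿ-1)/(2n))·|B_{2n}|·K^{n-1}` and `𝒮_{2n}^θ(x) = 0`. -/
theorem stmt14 (K : ℝ) (x : ℝ) (f₁ f₂ : ℝ → ℝ)
    (hf : IsFundPair (fun _ => K) x f₁ f₂) :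
    ∀ n : ℕ, 1 ≤ n →
      iteratedDeriv (2 * n - 1) (fun t => f₂ t / f₁ t) x =
        ((4 : ℝ) ^ n * ((4 : ℝ) ^ n - 1) / (2 * n)) *
          |((bernoulli (2 * n) : ℚ) : ℝ)| * K ^ (n - 1) ∧
      iteratedDeriv (2 * n) (fun t => f₂ t / f₁ t) x = 0 := by
  have hcoeff (k : ℕ) := congrArg (coeff k) (formalTaylorSeries_div_of_isFundPair hf)
  intro n hn
  obtain ⟨m, rfl⟩ : ∃ m, n = m + 1 := ⟨n - 1, by omega⟩
  have hodd := hcoeff (2 * m + 1)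
  have heven := hcoeff (2 * m + 2)
  rw [coeff_formalTaylorSeries, coeff_succ_X_mul, coeff_two_mul_compNegMulSq,
    div_eq_iff (by positivity)] at hodd
  rw [coeff_formalTaylorSeries, show 2 * m + 2 = 2 * m + 1 + 1 by ring, coeff_succ_X_mul,
    coeff_two_mul_add_one_compNegMulSq, div_eq_iff (by positivity), zero_mul] at heven
  refine ⟨?_, by rwa [show 2 * (m + 1) = 2 * m + 1 + 1 by ring]⟩
  rw [show 2 * (m + 1) - 1 = 2 * m + 1 by omega, hodd, ← Rat.cast_abs,
    abs_bernoulli_two_mul (by omega : m + 1 ≠ 0)]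
  have hfac : ((2 * m + 2)! : ℝ) = (2 * m + 2) * (2 * m + 1)! := by
    rw [Nat.factorial_succ]
    push_cast
    ring
  simp only [tanhSqrtDiv, coeff_mk, Nat.add_sub_cancel, show 2 * (m + 1) = 2 * m + 2 by ring]
  push_cast
  rw [hfac]
  field_simp
  ring

end
end
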